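/- arXiv:2208.13745 — 5 statements merged into one kernel-verified Lean document; each statement's English description precedes it below -/
import Mathlib

section
/- Let I be a squarefree monomial ideal in S = k[x_1,...,x_n] and s ≥ 1. Then the s-th symbolic power I^(s) equals the s-th *-differential power I^[s] = { f : ∂*f/∂*x^a ∈ I for all a ∈ ℕ^n with |a| ≤ s−1 }, where ∂* denotes the formal partial derivative without coefficients (on monomials, ∂*(x^b)/∂*(x^a) = x^{b−a} if a ≤ b componentwise, and 0 otherwise, extended linearly by taking the monomial support). -/
open MvPolynomial

/-- `I` is a squarefree monomial ideal: generated by squarefree monomials `x_F`. -/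
def IsSqFreeMonomialIdeal {k : Type*} [Field k] {n : ℕ}
    (I : Ideal (MvPolynomial (Fin n) k)) : Prop :=
  ∃ A : Set (Finset (Fin n)), I = Ideal.span ((fun F => ∏ i ∈ F, X i) '' A)

/-- `I` is a monomial ideal. -/
def IsMonomialIdeal {k : Type*} [Field k] {n : ℕ}
    (I : Ideal (MvPolynomial (Fin n) k)) : Prop :=
  ∃ A : Set (Fin n →₀ ℕ), I = Ideal.span ((fun a => monomial a (1 : k)) '' A)

/-- The Stanley-Reisner complex of a (squarefree monomial) ideal. -/
def SRComplex {k : Type*} [Field k] {n : ℕ}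
    (I : Ideal (MvPolynomial (Fin n) k)) : Set (Finset (Fin n)) :=
  {F | ∏ i ∈ F, X i ∉ I}

/-- A collection of finsets is an (abstract) simplicial complex if it is
downward closed. -/
def IsComplex {n : ℕ} (Δ : Set (Finset (Fin n))) : Prop :=
  ∀ F ∈ Δ, ∀ G, G ⊆ F → G ∈ Δ

def IsFacet {n : ℕ} (Δ : Set (Finset (Fin n))) (F : Finset (Fin n)) : Prop :=
  F ∈ Δ ∧ ∀ G ∈ Δ, F ⊆ G → F = G

/-- `Δ` is a cone over `t`: every facet contains `t`. -/
def IsConeOver {n : ℕ} (Δ : Set (Finset (Fin n))) (t : Fin n) : Prop :=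
  ∀ F, IsFacet Δ F → t ∈ F

/-- Exponent `a` is a minimal monomial generator of the monomial ideal `I`. -/
def IsMinGen {k : Type*} [Field k] {n : ℕ}
    (I : Ideal (MvPolynomial (Fin n) k)) (a : Fin n →₀ ℕ) : Prop :=
  monomial a (1 : k) ∈ I ∧
    ∀ i : Fin n, a i ≠ 0 → monomial (a - Finsupp.single i 1) (1 : k) ∉ I

/-- Boundary of a single oriented simplex (vertices ordered by `<`). -/
noncomputable def bdryVec (k : Type*) [Field k] {n : ℕ} (F : Finset (Fin n)) :
    Finset (Fin n) →₀ k :=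
  ∑ i ∈ F, ((-1 : k) ^ ((F.filter (· < i)).card)) • Finsupp.single (F.erase i) (1 : k)

/-- Simplicial boundary map on formal `k`-linear combinations of finsets. -/
noncomputable def bdry (k : Type*) [Field k] {n : ℕ} :
    (Finset (Fin n) →₀ k) →ₗ[k] (Finset (Fin n) →₀ k) :=
  Finsupp.lsum k fun F => LinearMap.toSpanSingleton k _ (bdryVec k F)

/-- The reduced simplicial homology `H̃_q(Δ; k)` is nonzero: there is a cycle
supported on faces of `Δ` of cardinality `q+1` which is not the boundary of a
chain supported on faces of `Δ` of cardinality `q+2`. -/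
def ReducedHomologyNonzero (k : Type*) [Field k] {n : ℕ}
    (Δ : Set (Finset (Fin n))) (q : ℤ) : Prop :=
  ∃ c : Finset (Fin n) →₀ k,
    (∀ F ∈ c.support, F ∈ Δ ∧ (F.card : ℤ) = q + 1) ∧
    bdry k c = 0 ∧
    ∀ b : Finset (Fin n) →₀ k,
      (∀ F ∈ b.support, F ∈ Δ ∧ (F.card : ℤ) = q + 2) → bdry k b ≠ c

/-- The link of a face `F` in `Δ`. -/
def linkOf {n : ℕ} (Δ : Set (Finset (Fin n))) (F : Finset (Fin n)) :
    Set (Finset (Fin n)) :=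
  {G | Disjoint F G ∧ F ∪ G ∈ Δ}

/-- The degree complex `Δ_a(I) = Δ(√(I : x^a))`. -/
noncomputable def degreeComplex {k : Type*} [Field k] {n : ℕ}
    (I : Ideal (MvPolynomial (Fin n) k)) (a : Fin n →₀ ℕ) : Set (Finset (Fin n)) :=
  SRComplex ((Submodule.colon I (Ideal.span {monomial a (1 : k)})).radical)

/-- The Castelnuovo-Mumford regularity of `S/I` for a monomial ideal `I`,
via the Hochster-type formula of Minh-Nam-Phong-Thuy-Vu (Lemma 2.12/2.19 of
[MNPTV]): `reg S/I = max{|a| + i : H̃_{i-1}(lk_{Δ_a(I)} F; k) ≠ 0` for some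
`F ∈ Δ_a(I)` with `F ∩ supp a = ∅}`. -/
noncomputable def regQuot {k : Type*} [Field k] {n : ℕ}
    (I : Ideal (MvPolynomial (Fin n) k)) : ℕ :=
  sSup {d : ℕ | ∃ (a : Fin n →₀ ℕ) (i : ℕ) (F : Finset (Fin n)),
    F ∈ degreeComplex I a ∧ (∀ j ∈ F, a j = 0) ∧
    ReducedHomologyNonzero k (linkOf (degreeComplex I a) F) ((i : ℤ) - 1) ∧
    d = (a.sum fun _ t => t) + i}

/-- The Castelnuovo-Mumford regularity of a (monomial) ideal `I`:
`reg I = reg S/I + 1`. -/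
noncomputable def reg {k : Type*} [Field k] {n : ℕ}
    (I : Ideal (MvPolynomial (Fin n) k)) : ℕ :=
  regQuot I + 1

/-- The `s`-th symbolic power: intersection of the `s`-th powers of the
minimal primes. -/
noncomputable def symbPow {R : Type*} [CommRing R] (I : Ideal R) (s : ℕ) : Ideal R :=
  ⨅ p ∈ I.minimalPrimes, p ^ s

/-- Squarefree part of an exponent. -/
noncomputable def sqfreePart {n : ℕ} (a : Fin n →₀ ℕ) : Fin n →₀ ℕ :=
  Finsupp.mapRange (fun t => min t 1) (by simp) a

open scoped Classical in
/-- The `*`-partial derivative (derivative without coefficients) of a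
polynomial with respect to `x^a`. -/
noncomputable def starDeriv {k : Type*} [Field k] {n : ℕ} (a : Fin n →₀ ℕ)
    (f : MvPolynomial (Fin n) k) : MvPolynomial (Fin n) k :=
  (AddMonoidAlgebra.coeff f).sum fun b c => if a ≤ b then monomial (b - a) c else 0

/-- The edge ideal of a simple graph. -/
noncomputable def edgeIdeal (k : Type*) [Field k] {n : ℕ}
    (G : SimpleGraph (Fin n)) : Ideal (MvPolynomial (Fin n) k) :=
  Ideal.span {f | ∃ i j, G.Adj i j ∧ f = X i * X j}

/-- A graph is gap-free: no induced pair of disjoint edges. -/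
def IsGapFree {n : ℕ} (G : SimpleGraph (Fin n)) : Prop :=
  ∀ a b c d : Fin n, G.Adj a b → G.Adj c d →
    a ≠ c → a ≠ d → b ≠ c → b ≠ d →
    (G.Adj a c ∨ G.Adj a d ∨ G.Adj b c ∨ G.Adj b d)

/-- The closed neighborhood of a set of vertices. -/
def closedNbhd {n : ℕ} (G : SimpleGraph (Fin n)) (U : Set (Fin n)) : Set (Fin n) :=
  U ∪ {v | ∃ u ∈ U, G.Adj u v}

/-- `J` is an intermediate ideal in `Inter(K, L)`: `J = K + (f_1, ..., f_t)`
where the `f_j` are minimal monomial generators of `L`. -/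
def IsIntermediate {k : Type*} [Field k] {n : ℕ}
    (J K L : Ideal (MvPolynomial (Fin n) k)) : Prop :=
  ∃ T : Set (Fin n →₀ ℕ), (∀ a ∈ T, IsMinGen L a) ∧
    J = K ⊔ Ideal.span ((fun a => monomial a (1 : k)) '' T)


section StarDerivAux

open scoped Classical

variable {k : Type*} [Field k] {n : ℕ}

/-- membership in a monomial ideal is monomial-wise -/
lemma mem_monSpan {A : Set (Fin n →₀ ℕ)} {f : MvPolynomial (Fin n) k} :
    f ∈ Ideal.span ((fun a => monomial a (1 : k)) '' A) ↔
      ∀ b ∈ f.support, ∃ a ∈ A, a ≤ b := by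
  constructor
  · intro hf
    let J : Ideal (MvPolynomial (Fin n) k) :=
      { carrier := {g | ∀ b ∈ g.support, ∃ a ∈ A, a ≤ b}
        zero_mem' := by simp
        add_mem' := by
          intro g h hg hh b hb
          rcases Finset.mem_union.mp (Finsupp.support_add hb) with h' | h'
          · exact hg b h'
          · exact hh b h'
        smul_mem' := by
          intro c g hg b hb
          rw [smul_eq_mul] at hb
          obtain ⟨b1, hb1, b2, hb2, rfl⟩ :=
            Finset.mem_add.mp (MvPolynomial.support_mul c g hb)
          obtain ⟨a, ha, hab⟩ := hg b2 hb2
          exact ⟨a, ha, le_trans hab (le_add_self)⟩ }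
    have : Ideal.span ((fun a => monomial a (1 : k)) '' A) ≤ J := by
      rw [Ideal.span_le]
      rintro _ ⟨a, ha, rfl⟩ b hb
      rw [MvPolynomial.support_monomial, if_neg (one_ne_zero)] at hb
      simp only [Finset.mem_singleton] at hb
      exact ⟨a, ha, hb ▸ le_rfl⟩
    exact this hf
  · intro hf
    rw [f.as_sum]
    refine Ideal.sum_mem _ fun b hb => ?_
    obtain ⟨a, ha, hab⟩ := hf b hb
    have : monomial b (coeff b f) =
        monomial a (1 : k) * monomial (b - a) (coeff b f) := by
      rw [monomial_mul, one_mul, add_tsub_cancel_of_le hab]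
    rw [this]
    exact Ideal.mul_mem_right _ _ (Ideal.subset_span ⟨a, ha, rfl⟩)


noncomputable def PG (k : Type*) [Field k] {n : ℕ} (G : Finset (Fin n)) :
    Ideal (MvPolynomial (Fin n) k) :=
  Ideal.span ((fun a => monomial a (1 : k)) '' ((fun i => Finsupp.single i 1) '' ↑G))

/-- degree-s part generators -/
def MGS {n : ℕ} (G : Finset (Fin n)) (s : ℕ) : Set (Fin n →₀ ℕ) :=
  {a | (∀ i, a i ≠ 0 → i ∈ G) ∧ (a.sum fun _ t => t) = s}

/-- the indicator exponent of a finset -/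
noncomputable def indF {n : ℕ} (F : Finset (Fin n)) : Fin n →₀ ℕ :=
  ∑ i ∈ F, Finsupp.single i 1

noncomputable def killG (G : Finset (Fin n)) :
    MvPolynomial (Fin n) k →ₐ[k] MvPolynomial (Fin n) k :=
  aeval (fun i => if i ∈ G then 0 else X i)

lemma killG_monomial (G : Finset (Fin n)) (b : Fin n →₀ ℕ) (c : k) :
    killG G (monomial b c) =
      if ∀ i ∈ G, b i = 0 then monomial b c else 0 := by
  rw [killG, aeval_monomial]
  split_ifs with h
  · have : (b.prod fun i e => (if i ∈ G then (0 : MvPolynomial (Fin n) k) else X i) ^ e)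
        = b.prod fun i e => (X i) ^ e := by
      apply Finsupp.prod_congr
      intro i hi
      rw [if_neg]
      intro hiG
      exact (Finsupp.mem_support_iff.mp hi) (h i hiG)
    rw [this, MvPolynomial.monomial_eq, MvPolynomial.algebraMap_eq]
  · push_neg at h
    obtain ⟨i, hiG, hbi⟩ := h
    have : (b.prod fun i e => (if i ∈ G then (0 : MvPolynomial (Fin n) k) else X i) ^ e) = 0 := by
      apply Finset.prod_eq_zero (Finsupp.mem_support_iff.mpr hbi)
      simp only [if_pos hiG]
      exact zero_pow hbi
    rw [this, mul_zero]

lemma coeff_killG (G : Finset (Fin n)) (f : MvPolynomial (Fin n) k) (d : Fin n →₀ ℕ) :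
    coeff d (killG G f) = if ∀ i ∈ G, d i = 0 then coeff d f else 0 := by
  conv_lhs => rw [f.as_sum]
  rw [map_sum]
  rw [MvPolynomial.coeff_sum]
  have : ∀ b ∈ f.support,
      coeff d (killG G (monomial b (coeff b f))) =
      if b = d then (if ∀ i ∈ G, d i = 0 then coeff d f else 0) else 0 := by
    intro b _
    rw [killG_monomial]
    split_ifs with h1 h2 h3 <;>
      simp_all [coeff_monomial, coeff_zero]
  rw [Finset.sum_congr rfl this, Finset.sum_ite_eq' f.support d]
  split_ifs with h1 h2 <;>
    first
      | rfl
      | (exact (MvPolynomial.notMem_support_iff.mp h1).symm)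

lemma single_le_iff {i : Fin n} {b : Fin n →₀ ℕ} :
    Finsupp.single i 1 ≤ b ↔ 1 ≤ b i := by
  constructor
  · intro h
    simpa using h i
  · intro h j
    rcases eq_or_ne j i with rfl | hj
    · simpa using h
    · simp [Finsupp.single_apply, hj.symm]

lemma mem_PG {G : Finset (Fin n)} {f : MvPolynomial (Fin n) k} :
    f ∈ PG k G ↔ ∀ b ∈ f.support, ∃ i ∈ G, b i ≠ 0 := by
  rw [PG, mem_monSpan]
  apply forall₂_congr
  intro b _
  constructor
  · rintro ⟨a, ⟨i, hi, rfl⟩, hab⟩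
    exact ⟨i, hi, by have := single_le_iff.mp hab; omega⟩
  · rintro ⟨i, hi, hbi⟩
    exact ⟨Finsupp.single i 1, ⟨i, hi, rfl⟩, single_le_iff.mpr (by omega)⟩

lemma PG_eq_ker (G : Finset (Fin n)) :
    PG k G = RingHom.ker (killG (k := k) G).toRingHom := by
  ext f
  rw [RingHom.mem_ker, mem_PG]
  constructor
  · intro h
    ext d
    rw [AlgHom.toRingHom_eq_coe, RingHom.coe_coe] at *
    rw [coeff_killG, coeff_zero]
    split_ifs with hd
    · by_contra hne
      obtain ⟨i, hi, hdi⟩ := h d (MvPolynomial.mem_support_iff.mpr hne)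
      exact hdi (hd i hi)
    · rfl
  · intro h b hb
    by_contra hne
    push_neg at hne
    have : coeff b (killG (k := k) G f) = coeff b f := by
      rw [coeff_killG, if_pos]
      intro i hi
      by_contra h'
      exact h' (hne i hi)
    rw [AlgHom.toRingHom_eq_coe, RingHom.coe_coe] at h
    rw [h, coeff_zero] at this
    exact (MvPolynomial.mem_support_iff.mp hb) this.symm

instance PG_prime (G : Finset (Fin n)) : (PG k G).IsPrime := by
  rw [PG_eq_ker]
  exact RingHom.ker_isPrime _

lemma finsupp_sum_eq_sum_univ (a : Fin n →₀ ℕ) :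
    (a.sum fun _ t => t) = ∑ i, a i :=
  Finsupp.sum_fintype _ _ (fun _ => rfl)


lemma sum_add_single (a : Fin n →₀ ℕ) (i : Fin n) :
    ((a + Finsupp.single i 1).sum fun _ t => t) = (a.sum fun _ t => t) + 1 := by
  rw [finsupp_sum_eq_sum_univ, finsupp_sum_eq_sum_univ]
  simp only [Finsupp.add_apply, Finset.sum_add_distrib]
  congr 1
  simp [Finsupp.single_apply]

lemma PG_pow (G : Finset (Fin n)) (s : ℕ) :
    PG k G ^ s = Ideal.span ((fun a => monomial a (1 : k)) '' MGS G s) := by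
  induction s with
  | zero =>
    rw [pow_zero]
    have h1 : MGS G 0 = {0} := by
      ext a
      simp only [MGS, Set.mem_setOf_eq, Set.mem_singleton_iff]
      constructor
      · rintro ⟨-, h⟩
        ext i
        have := finsupp_sum_eq_sum_univ a ▸ h
        have := Finset.sum_eq_zero_iff.mp this i (Finset.mem_univ i)
        simpa using this
      · rintro rfl; simp
    have h2 : ((fun a => monomial a (1 : k)) '' {0}) = {(1 : MvPolynomial (Fin n) k)} := by
      simp [Set.image_singleton, monomial_zero']
    rw [h1, h2, Ideal.span_singleton_one, Ideal.one_eq_top]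
  | succ s ih =>
    rw [pow_succ, ih, PG, Ideal.span_mul_span']
    apply le_antisymm
    · rw [Ideal.span_le]
      rintro _ ⟨_, ⟨a, ⟨haG, has⟩, rfl⟩, _, ⟨_, ⟨i, hi, rfl⟩, rfl⟩, rfl⟩
      apply Ideal.subset_span
      refine ⟨a + Finsupp.single i 1, ⟨?_, ?_⟩, ?_⟩
      · intro j hj
        rw [Finsupp.add_apply] at hj
        by_cases hja : a j ≠ 0
        · exact haG j hja
        · have : Finsupp.single i 1 j ≠ 0 := by omega
          have : j = i := by
            by_contra hne
            rw [Finsupp.single_apply, if_neg (Ne.symm hne)] at this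
            exact this rfl
          exact this ▸ hi
      · rw [sum_add_single, has]
      · show monomial (a + Finsupp.single i 1) (1 : k)
          = monomial a (1 : k) * monomial (Finsupp.single i 1) (1 : k)
        rw [monomial_mul, mul_one]
    · rw [Ideal.span_le]
      rintro _ ⟨c, ⟨hcG, hcs⟩, rfl⟩
      have hc0 : ∃ i, c i ≠ 0 := by
        by_contra h
        push_neg at h
        have : c = 0 := Finsupp.ext h
        rw [this] at hcs
        simp at hcs
      obtain ⟨i, hi⟩ := hc0
      have hiG : i ∈ G := hcG i hi
      have hle : Finsupp.single i 1 ≤ c := by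
        intro j
        rcases eq_or_ne j i with rfl | hj
        · simpa using Nat.one_le_iff_ne_zero.mpr hi
        · simp [Finsupp.single_apply, hj.symm]
      set d := c - Finsupp.single i 1 with hd
      have hcd : c = d + Finsupp.single i 1 := by
        rw [hd, tsub_add_cancel_of_le hle]
      have hds : (d.sum fun _ t => t) = s := by
        have h1 : (c.sum fun _ t => t) = (d.sum fun _ t => t) + 1 := by
          conv_lhs => rw [hcd]
          rw [sum_add_single]
        omega
      apply Ideal.subset_span
      refine ⟨monomial d 1, ⟨d, ⟨?_, hds⟩, rfl⟩, monomial (Finsupp.single i 1) 1,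
        ⟨_, ⟨i, hiG, rfl⟩, rfl⟩, ?_⟩
      · intro j hj
        apply hcG
        rw [hcd]
        simp only [Finsupp.add_apply]
        omega
      · show monomial d (1 : k) * monomial (Finsupp.single i 1) (1 : k)
          = monomial c (1 : k)
        rw [monomial_mul, one_mul, ← hcd]

/-- if `s ≤ ∑_{i∈G} b i` then there is `a ≤ b` supported in `G` with `|a| = s`. -/
lemma exists_le_sum {G : Finset (Fin n)} {b : Fin n →₀ ℕ} {s : ℕ}
    (h : s ≤ ∑ i ∈ G, b i) :
    ∃ a : Fin n →₀ ℕ, a ≤ b ∧ (∀ i, a i ≠ 0 → i ∈ G) ∧ (a.sum fun _ t => t) = s := by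
  induction s with
  | zero => exact ⟨0, zero_le, by simp, by simp⟩
  | succ s ih =>
    obtain ⟨a, hab, haG, has⟩ := ih (le_trans (Nat.le_succ s) h)
    have hlt : ∑ i ∈ G, a i < ∑ i ∈ G, b i := by
      have : ∑ i ∈ G, a i ≤ s := by
        have h1 : (a.sum fun _ t => t) = ∑ i ∈ G, a i := by
          rw [finsupp_sum_eq_sum_univ]
          rw [← Finset.sum_subset (Finset.subset_univ G)]
          intro i _ hiG
          by_contra h'
          exact hiG (haG i h')
        omega
      omega
    obtain ⟨i, hiG, hia⟩ : ∃ i ∈ G, a i < b i := by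
      by_contra h'
      push_neg at h'
      exact absurd (Finset.sum_le_sum h') (not_le_of_gt hlt)
    refine ⟨a + Finsupp.single i 1, ?_, ?_, ?_⟩
    · intro j
      simp only [Finsupp.add_apply, Finsupp.single_apply]
      rcases eq_or_ne i j with rfl | hj
      · simpa using hia
      · simp only [if_neg hj]
        exact le_trans (by omega) (hab j)
    · intro j hj
      simp only [Finsupp.add_apply] at hj
      by_cases hja : a j ≠ 0
      · exact haG j hja
      · have h1 : Finsupp.single i 1 j ≠ 0 := by omega
        have : j = i := by
          by_contra hne
          rw [Finsupp.single_apply, if_neg (Ne.symm hne)] at h1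
          exact h1 rfl
        exact this ▸ hiG
    · have hstep : ((a + Finsupp.single i 1).sum fun _ t => t)
          = (a.sum fun _ t => t) + 1 := by
        rw [finsupp_sum_eq_sum_univ, finsupp_sum_eq_sum_univ]
        simp only [Finsupp.add_apply, Finset.sum_add_distrib]
        congr 1
        simp [Finsupp.single_apply]
      rw [hstep, has]

lemma sum_G_of_supp_subset {G : Finset (Fin n)} {a : Fin n →₀ ℕ}
    (haG : ∀ i, a i ≠ 0 → i ∈ G) : (a.sum fun _ t => t) = ∑ i ∈ G, a i := by
  rw [finsupp_sum_eq_sum_univ]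
  rw [← Finset.sum_subset (Finset.subset_univ G)]
  intro i _ hiG
  by_contra h'
  exact hiG (haG i h')

lemma mem_PG_pow {G : Finset (Fin n)} {s : ℕ} {f : MvPolynomial (Fin n) k} :
    f ∈ PG k G ^ s ↔ ∀ b ∈ f.support, s ≤ ∑ i ∈ G, b i := by
  rw [PG_pow, mem_monSpan]
  apply forall₂_congr
  intro b _
  constructor
  · rintro ⟨a, ⟨haG, has⟩, hab⟩
    calc s = ∑ i ∈ G, a i := by rw [← has]; exact sum_G_of_supp_subset haG
    _ ≤ ∑ i ∈ G, b i := Finset.sum_le_sum fun i _ => hab i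
  · intro h
    obtain ⟨a, hab, haG, has⟩ := exists_le_sum h
    exact ⟨a, ⟨haG, has⟩, hab⟩

lemma indF_apply (F : Finset (Fin n)) (j : Fin n) :
    indF F j = if j ∈ F then 1 else 0 := by
  rw [indF, Finset.sum_apply']
  simp only [Finsupp.single_apply]
  exact Finset.sum_ite_eq' F j (fun _ => 1)

lemma indF_le_iff {F : Finset (Fin n)} {c : Fin n →₀ ℕ} :
    indF F ≤ c ↔ ∀ i ∈ F, 1 ≤ c i := by
  constructor
  · intro h i hi
    have := h i
    rwa [indF_apply, if_pos hi] at this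
  · intro h j
    rw [indF_apply]
    split_ifs with hj
    · exact h j hj
    · exact Nat.zero_le _

lemma prod_X_eq (k : Type*) [Field k] {n : ℕ} (F : Finset (Fin n)) :
    (∏ i ∈ F, X i : MvPolynomial (Fin n) k) = monomial (indF F) 1 := by
  classical
  induction F using Finset.induction with
  | empty => simp [indF, monomial_zero']
  | insert _ _ hx ih =>
    rename_i a s
    have h1 : indF (insert a s) = Finsupp.single a 1 + indF s := by
      rw [indF, indF, Finset.sum_insert hx]
    have hX : (X a : MvPolynomial (Fin n) k) = monomial (Finsupp.single a 1) 1 := by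
      rw [← X_pow_eq_monomial, pow_one]
    rw [Finset.prod_insert hx, ih, h1, hX, monomial_mul, one_mul]

/-- the per-monomial combinatorial core -/
lemma core {A : Set (Finset (Fin n))} {b : Fin n →₀ ℕ} {s : ℕ} (hs : 1 ≤ s) :
    (∀ G : Finset (Fin n), (∀ F ∈ A, ∃ i ∈ F, i ∈ G) → s ≤ ∑ i ∈ G, b i) ↔
    (∀ a : Fin n →₀ ℕ, (a.sum fun _ t => t) ≤ s - 1 → a ≤ b →
      ∃ F ∈ A, ∀ i ∈ F, 1 ≤ (b - a) i) := by
  constructor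
  · intro h a hasum hab
    by_contra hcon
    push_neg at hcon
    set G : Finset (Fin n) := Finset.univ.filter (fun i => (b - a) i = 0) with hG
    have hcover : ∀ F ∈ A, ∃ i ∈ F, i ∈ G := by
      intro F hF
      obtain ⟨i, hiF, hi⟩ := hcon F hF
      exact ⟨i, hiF, Finset.mem_filter.mpr ⟨Finset.mem_univ i, by omega⟩⟩
    have hle := h G hcover
    have : ∑ i ∈ G, b i ≤ s - 1 := by
      have hba : ∀ i ∈ G, b i = a i := by
        intro i hi
        have h1 : (b - a) i = 0 := (Finset.mem_filter.mp hi).2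
        have h2 : a i ≤ b i := hab i
        rw [Finsupp.tsub_apply] at h1
        omega
      rw [Finset.sum_congr rfl hba]
      calc ∑ i ∈ G, a i ≤ ∑ i, a i := Finset.sum_le_sum_of_subset (Finset.subset_univ G)
      _ = a.sum fun _ t => t := (finsupp_sum_eq_sum_univ a).symm
      _ ≤ s - 1 := hasum
    omega
  · intro h G hG
    by_contra hcon
    push_neg at hcon
    have hsum : ∑ i ∈ G, b i ≤ s - 1 := by omega
    set a : Fin n →₀ ℕ := Finsupp.filter (· ∈ G) b with ha
    have haap : ∀ j, a j = if j ∈ G then b j else 0 := fun j => Finsupp.filter_apply _ _ _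
    have hab : a ≤ b := by
      intro j
      rw [haap]
      split_ifs <;> omega
    have hasum : (a.sum fun _ t => t) ≤ s - 1 := by
      have : (a.sum fun _ t => t) = ∑ i ∈ G, b i := by
        rw [finsupp_sum_eq_sum_univ]
        rw [← Finset.sum_subset (Finset.subset_univ G) (fun i _ hiG => by rw [haap, if_neg hiG])]
        exact Finset.sum_congr rfl fun i hi => by rw [haap, if_pos hi]
      omega
    obtain ⟨F, hFA, hF⟩ := h a hasum hab
    obtain ⟨i, hiF, hiG⟩ := hG F hFA
    have := hF i hiF
    rw [Finsupp.tsub_apply, haap, if_pos hiG] at this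
    omega

-- coefficient of starDeriv
lemma coeff_starDeriv (a : Fin n →₀ ℕ) (f : MvPolynomial (Fin n) k) (d : Fin n →₀ ℕ) :
    coeff d (starDeriv a f) = coeff (d + a) f := by
  rw [starDeriv, Finsupp.sum, MvPolynomial.coeff_sum]
  trans (∑ b ∈ f.support, if b = d + a then coeff b f else 0)
  · apply Finset.sum_congr rfl
    intro b _
    split_ifs with h1 h2 h3
    · subst h2
      rw [coeff_monomial, if_pos (add_tsub_cancel_right d a)]
      rfl
    · rw [coeff_monomial, if_neg]
      intro he
      exact h2 (by rw [← he, tsub_add_cancel_of_le h1])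
    · exact absurd (h3 ▸ le_add_self) h1
    · rw [coeff_zero]
  · rw [Finset.sum_ite_eq' f.support (d + a)]
    split_ifs with h
    · rfl
    · exact (MvPolynomial.notMem_support_iff.mp h).symm

lemma mem_support_starDeriv {a : Fin n →₀ ℕ} {f : MvPolynomial (Fin n) k}
    {d : Fin n →₀ ℕ} : d ∈ (starDeriv a f).support ↔ d + a ∈ f.support := by
  rw [MvPolynomial.mem_support_iff, MvPolynomial.mem_support_iff, coeff_starDeriv]

-- product of elements in a prime
lemma prime_prod_mem {p : Ideal (MvPolynomial (Fin n) k)} (hp : p.IsPrime)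
    (F : Finset (Fin n)) (h : (∏ i ∈ F, X i : MvPolynomial (Fin n) k) ∈ p) :
    ∃ i ∈ F, (X i : MvPolynomial (Fin n) k) ∈ p := by
  classical
  induction F using Finset.induction with
  | empty =>
    simp only [Finset.prod_empty] at h
    exact absurd (p.eq_top_of_isUnit_mem h isUnit_one) hp.ne_top
  | insert _ _ hx ih =>
    rename_i j s
    rw [Finset.prod_insert hx] at h
    rcases hp.mem_or_mem h with h' | h'
    · exact ⟨j, Finset.mem_insert_self j s, h'⟩
    · obtain ⟨i, hi, hxi⟩ := ih h'
      exact ⟨i, Finset.mem_insert_of_mem hi, hxi⟩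

lemma X_mem_PG {G : Finset (Fin n)} {i : Fin n} :
    (X i : MvPolynomial (Fin n) k) ∈ PG k G ↔ i ∈ G := by
  rw [mem_PG]
  constructor
  · intro h
    obtain ⟨j, hj, hij⟩ := h (Finsupp.single i 1)
      (by rw [MvPolynomial.mem_support_iff, MvPolynomial.coeff_X, if_pos rfl]; exact (one_ne_zero : (1 : k) ≠ 0))
    rcases eq_or_ne j i with rfl | hne
    · exact hj
    · rw [Finsupp.single_apply, if_neg hne.symm] at hij
      exact absurd rfl hij
  · intro h b hb
    rw [MvPolynomial.support_X, Finset.mem_singleton] at hb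
    subst hb
    exact ⟨i, h, by rw [Finsupp.single_eq_same]; exact one_ne_zero⟩

/-- symbolic power membership via covers -/
lemma mem_symbPow_iff_covers {A : Set (Finset (Fin n))} {s : ℕ}
    {f : MvPolynomial (Fin n) k} :
    f ∈ symbPow (Ideal.span ((fun F => ∏ i ∈ F, X i) '' A) : Ideal (MvPolynomial (Fin n) k)) s ↔
      ∀ G : Finset (Fin n), (∀ F ∈ A, ∃ i ∈ F, i ∈ G) →
        f ∈ PG k G ^ s := by
  set I : Ideal (MvPolynomial (Fin n) k) := Ideal.span ((fun F => ∏ i ∈ F, X i) '' A) with hI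
  have hmem : f ∈ symbPow I s ↔ ∀ p ∈ I.minimalPrimes, f ∈ p ^ s := by
    rw [symbPow]
    simp [Ideal.mem_iInf]
  rw [hmem]
  have hIle : ∀ G : Finset (Fin n), (∀ F ∈ A, ∃ i ∈ F, i ∈ G) → I ≤ PG k G := by
    intro G hG
    rw [hI, Ideal.span_le]
    rintro _ ⟨F, hF, rfl⟩
    obtain ⟨i, hiF, hiG⟩ := hG F hF
    show (∏ i ∈ F, X i : MvPolynomial (Fin n) k) ∈ PG k G
    have heq : (∏ i ∈ F, X i : MvPolynomial (Fin n) k)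
        = (∏ j ∈ F.erase i, X j) * X i := by
      rw [mul_comm, Finset.mul_prod_erase F _ hiF]
    rw [heq]
    exact Ideal.mul_mem_left _ _ (X_mem_PG.mpr hiG)
  constructor
  · intro h G hG
    haveI : (PG k G).IsPrime := PG_prime G
    have := Ideal.exists_minimalPrimes_le (J := PG k G) (hIle G hG)
    obtain ⟨p, hpmin, hple⟩ := this
    exact Ideal.pow_right_mono hple s (h p hpmin)
  · intro h p hp
    set G : Finset (Fin n) := Finset.univ.filter (fun i => (X i : MvPolynomial (Fin n) k) ∈ p)
      with hG
    have hpprime : p.IsPrime := hp.1.1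
    have hIp : I ≤ p := hp.1.2
    have hcov : ∀ F ∈ A, ∃ i ∈ F, i ∈ G := by
      intro F hF
      have : (∏ i ∈ F, X i : MvPolynomial (Fin n) k) ∈ p :=
        hIp (Ideal.subset_span ⟨F, hF, rfl⟩)
      obtain ⟨i, hiF, hXi⟩ := prime_prod_mem hpprime F this
      exact ⟨i, hiF, Finset.mem_filter.mpr ⟨Finset.mem_univ i, hXi⟩⟩
    have hPGp : PG k G ≤ p := by
      rw [PG, Ideal.span_le]
      rintro _ ⟨_, ⟨i, hi, rfl⟩, rfl⟩
      have hXi : (X i : MvPolynomial (Fin n) k) ∈ p := by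
        have := Finset.mem_filter.mp hi
        exact this.2
      show monomial (Finsupp.single i 1) (1 : k) ∈ p
      have heq : (X i : MvPolynomial (Fin n) k) = monomial (Finsupp.single i 1) 1 := by
        rw [← X_pow_eq_monomial, pow_one]
      rw [← heq]
      exact hXi
    have hppg : p = PG k G :=
      le_antisymm (hp.2 ⟨PG_prime G, hIle G hcov⟩ hPGp) hPGp
    rw [hppg]
    exact h G hcov

end StarDerivAux

/-- for a squarefree monomial ideal, the `s`-th symbolic power
equals the `s`-th `*`-differential power. -/
theorem stmt7 {k : Type*} [Field k] {n : ℕ}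
    (I : Ideal (MvPolynomial (Fin n) k)) (hI : IsSqFreeMonomialIdeal I)
    (s : ℕ) (hs : 1 ≤ s) (f : MvPolynomial (Fin n) k) :
    f ∈ symbPow I s ↔
      ∀ a : Fin n →₀ ℕ, (a.sum fun _ t => t) ≤ s - 1 → starDeriv a f ∈ I := by
  obtain ⟨A, hA⟩ := hI
  subst hA
  have hmemI : ∀ g : MvPolynomial (Fin n) k,
      g ∈ Ideal.span ((fun F => ∏ i ∈ F, X i) '' A : Set (MvPolynomial (Fin n) k)) ↔
        ∀ b ∈ g.support, ∃ F ∈ A, indF F ≤ b := by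
    intro g
    have himg : ((fun F => ∏ i ∈ F, X i) '' A : Set (MvPolynomial (Fin n) k))
        = (fun a => monomial a (1 : k)) '' (indF '' A) := by
      rw [Set.image_image]
      exact Set.image_congr fun F _ => prod_X_eq k F
    rw [himg, mem_monSpan]
    apply forall₂_congr
    intro b _
    constructor
    · rintro ⟨_, ⟨F, hF, rfl⟩, h⟩
      exact ⟨F, hF, h⟩
    · rintro ⟨F, hF, h⟩
      exact ⟨indF F, ⟨F, hF, rfl⟩, h⟩
  rw [mem_symbPow_iff_covers]
  constructor
  · intro h a ha
    rw [hmemI]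
    intro d hd
    rw [mem_support_starDeriv] at hd
    have hGs : ∀ G : Finset (Fin n), (∀ F ∈ A, ∃ i ∈ F, i ∈ G) →
        s ≤ ∑ i ∈ G, (d + a) i :=
      fun G hG => mem_PG_pow.mp (h G hG) (d + a) hd
    obtain ⟨F, hF, hFle⟩ := (core hs).mp hGs a ha le_add_self
    refine ⟨F, hF, ?_⟩
    rw [indF_le_iff]
    intro i hi
    have := hFle i hi
    rwa [add_tsub_cancel_right] at this
  · intro h G hG
    rw [mem_PG_pow]
    intro b hb
    refine (core hs).mpr ?_ G hG
    intro a hasum hab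
    have hIa := (hmemI (starDeriv a f)).mp (h a hasum)
    have hd : b - a + a ∈ f.support := by
      rw [tsub_add_cancel_of_le hab]
      exact hb
    obtain ⟨F, hF, hFle⟩ := hIa (b - a) (mem_support_starDeriv.mpr hd)
    exact ⟨F, hF, fun i hi => indF_le_iff.mp hFle i hi⟩
end

section
/- Let I be a nonzero squarefree monomial ideal, s ≥ 1, and let J be a monomial ideal with I^s ⊆ J ⊆ I^(s). If a ∈ ℕ^n satisfies |a| ≤ s−1, then the radical of (J : x^a) equals I; equivalently, the degree complex Δ_a(J) equals Δ(I). -/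
open MvPolynomial

namespace Stmt8Aux

open MvPolynomial

open scoped Classical

variable {k : Type*} [Field k] {n : ℕ}

/-- The ideal of polynomials all of whose exponents satisfy an upward-closed
predicate. -/
def upSet (P : (Fin n →₀ ℕ) → Prop) (hP : ∀ e d, P d → P (e + d)) :
    Ideal (MvPolynomial (Fin n) k) where
  carrier := {f | ∀ b ∈ f.support, P b}
  zero_mem' := by simp
  add_mem' := by
    intro f g hf hg b hb
    rcases Finset.mem_union.1 (MvPolynomial.support_add hb) with h | h
    · exact hf b h
    · exact hg b h
  smul_mem' := by
    intro c f hf b hb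
    rw [smul_eq_mul] at hb
    obtain ⟨e, he, d, hd, rfl⟩ := Finset.mem_add.1 (MvPolynomial.support_mul c f hb)
    exact hP e d (hf d hd)

lemma mem_upSet {P : (Fin n →₀ ℕ) → Prop} {hP : ∀ e d, P d → P (e + d)}
    {f : MvPolynomial (Fin n) k} :
    f ∈ upSet P hP ↔ ∀ b ∈ f.support, P b := Iff.rfl

lemma mem_span_monomials {T : Set (Fin n →₀ ℕ)} {f : MvPolynomial (Fin n) k} :
    f ∈ Ideal.span ((fun a => monomial a (1 : k)) '' T) ↔
      ∀ b ∈ f.support, ∃ a ∈ T, a ≤ b := by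
  constructor
  · intro hf
    have hle : Ideal.span ((fun a => monomial a (1 : k)) '' T) ≤
        upSet (fun b => ∃ a ∈ T, a ≤ b)
          (fun e d hd => by
            obtain ⟨a, haT, had⟩ := hd
            exact ⟨a, haT, had.trans (le_add_self)⟩) := by
      rw [Ideal.span_le]
      rintro _ ⟨a, haT, rfl⟩ b hb
      rw [support_monomial, if_neg (one_ne_zero)] at hb
      rw [Finset.mem_singleton] at hb
      exact ⟨a, haT, hb.ge⟩
    exact hle hf
  · intro hf
    rw [as_sum f]
    refine Ideal.sum_mem _ fun b hb => ?_
    obtain ⟨a, haT, hab⟩ := hf b hb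
    have : monomial b (coeff b f) = monomial a (1 : k) * monomial (b - a) (coeff b f) := by
      rw [monomial_mul, one_mul, add_tsub_cancel_of_le hab]
    rw [this]
    exact Ideal.mul_mem_right _ _ (Ideal.subset_span ⟨a, haT, rfl⟩)

/-- The prime ideal generated by the variables in `C`. -/
noncomputable def vId (C : Set (Fin n)) : Ideal (MvPolynomial (Fin n) k) :=
  Ideal.span ((fun a => monomial a (1 : k)) '' ((fun i => Finsupp.single i 1) '' C))

lemma mem_vId {C : Set (Fin n)} {f : MvPolynomial (Fin n) k} :
    f ∈ vId C ↔ ∀ b ∈ f.support, ∃ i ∈ C, b i ≠ 0 := by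
  rw [vId, mem_span_monomials]
  apply forall₂_congr
  intro b _
  constructor
  · rintro ⟨_, ⟨i, hiC, rfl⟩, hle⟩
    refine ⟨i, hiC, ?_⟩
    have := Finsupp.single_le_iff.1 hle
    omega
  · rintro ⟨i, hiC, hbi⟩
    exact ⟨_, ⟨i, hiC, rfl⟩, Finsupp.single_le_iff.2 (by omega)⟩

lemma X_mem_vId {C : Set (Fin n)} {i : Fin n} (hi : i ∈ C) :
    (X i : MvPolynomial (Fin n) k) ∈ vId C := by
  rw [← pow_one (X i : MvPolynomial (Fin n) k), X_pow_eq_monomial]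
  exact Ideal.subset_span ⟨_, ⟨i, hi, rfl⟩, rfl⟩

noncomputable def kill (C : Set (Fin n)) :
    MvPolynomial (Fin n) k →ₐ[k] MvPolynomial (Fin n) k :=
  aeval (fun i => if i ∈ C then 0 else X i)

lemma kill_monomial_of_mem {C : Set (Fin n)} {b : Fin n →₀ ℕ} (c : k)
    {i : Fin n} (hi : i ∈ C) (hbi : b i ≠ 0) :
    kill C (monomial b c) = 0 := by
  rw [kill, aeval_monomial]
  have : (b.prod fun j e => (if j ∈ C then (0 : MvPolynomial (Fin n) k) else X j) ^ e) = 0 := by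
    rw [Finsupp.prod]
    refine Finset.prod_eq_zero (Finsupp.mem_support_iff.2 hbi) ?_
    rw [if_pos hi]
    exact zero_pow hbi
  rw [this, mul_zero]

lemma kill_monomial_of_not_mem {C : Set (Fin n)} {b : Fin n →₀ ℕ} (c : k)
    (h : ∀ i ∈ C, b i = 0) :
    kill C (monomial b c) = monomial b c := by
  rw [kill, aeval_monomial, monomial_eq]
  congr 1
  rw [Finsupp.prod, Finsupp.prod]
  refine Finset.prod_congr rfl fun j hj => ?_
  rw [if_neg]
  intro hjC
  exact Finsupp.mem_support_iff.1 hj (h j hjC)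

lemma sub_kill_mem (C : Set (Fin n)) (f : MvPolynomial (Fin n) k) :
    f - kill C f ∈ vId C := by
  have hrw : f - kill C f =
      ∑ b ∈ f.support, (monomial b (coeff b f) - kill C (monomial b (coeff b f))) := by
    rw [Finset.sum_sub_distrib, ← map_sum, ← as_sum]
  rw [hrw]
  refine Ideal.sum_mem _ fun b hb => ?_
  by_cases hc : ∃ i ∈ C, b i ≠ 0
  · obtain ⟨i, hiC, hbi⟩ := hc
    rw [kill_monomial_of_mem _ hiC hbi, sub_zero]
    rw [mem_vId]
    intro b' hb'
    rw [support_monomial] at hb'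
    split at hb'
    · simp at hb'
    · rw [Finset.mem_singleton] at hb'
      subst hb'
      exact ⟨i, hiC, hbi⟩
  · push_neg at hc
    rw [kill_monomial_of_not_mem _ hc, sub_self]
    exact Ideal.zero_mem _

lemma vId_eq_ker (C : Set (Fin n)) :
    vId C = RingHom.ker (kill C : MvPolynomial (Fin n) k →ₐ[k] MvPolynomial (Fin n) k) := by
  apply le_antisymm
  · rw [vId, Ideal.span_le]
    rintro _ ⟨_, ⟨i, hiC, rfl⟩, rfl⟩
    rw [SetLike.mem_coe, RingHom.mem_ker]
    exact kill_monomial_of_mem _ hiC (by simp)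
  · intro f hf
    rw [RingHom.mem_ker] at hf
    have := sub_kill_mem C f
    rwa [hf, sub_zero] at this

lemma vId_isPrime (C : Set (Fin n)) : (vId C : Ideal (MvPolynomial (Fin n) k)).IsPrime := by
  rw [vId_eq_ker]
  exact RingHom.ker_isPrime _

/-- The `C`-weight of an exponent. -/
noncomputable def wC (C : Set (Fin n)) (b : Fin n →₀ ℕ) : ℕ :=
  ∑ i : Fin n, if i ∈ C then b i else 0

lemma wC_add (C : Set (Fin n)) (b c : Fin n →₀ ℕ) :
    wC C (b + c) = wC C b + wC C c := by
  rw [wC, wC, wC, ← Finset.sum_add_distrib]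
  refine Finset.sum_congr rfl fun i _ => ?_
  by_cases h : i ∈ C <;> simp [h]

lemma wC_pos {C : Set (Fin n)} {b : Fin n →₀ ℕ} (h : 0 < wC C b) :
    ∃ i ∈ C, b i ≠ 0 := by
  by_contra hc
  push_neg at hc
  have : wC C b = 0 := by
    rw [wC]
    refine Finset.sum_eq_zero fun i _ => ?_
    by_cases hi : i ∈ C
    · rw [if_pos hi, hc i hi]
    · rw [if_neg hi]
  omega

lemma wC_le_sum (C : Set (Fin n)) (b : Fin n →₀ ℕ) :
    wC C b ≤ b.sum fun _ t => t := by
  rw [Finsupp.sum_fintype _ _ (fun _ => rfl), wC]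
  refine Finset.sum_le_sum fun i _ => ?_
  by_cases h : i ∈ C <;> simp [h]

lemma vId_pow_le (C : Set (Fin n)) (s : ℕ) {f : MvPolynomial (Fin n) k}
    (hf : f ∈ (vId C : Ideal (MvPolynomial (Fin n) k)) ^ s) :
    ∀ b ∈ f.support, s ≤ wC C b := by
  induction s generalizing f with
  | zero => exact fun b _ => Nat.zero_le _
  | succ t ih =>
    rw [pow_succ] at hf
    refine Submodule.mul_induction_on hf ?_ ?_
    · intro r hr x hx b hb
      obtain ⟨e, he, d, hd, rfl⟩ := Finset.mem_add.1 (MvPolynomial.support_mul r x hb)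
      have h1 : t ≤ wC C e := ih hr e he
      have h2 : 1 ≤ wC C d := by
        obtain ⟨i, hiC, hdi⟩ := mem_vId.1 hx d hd
        have : (if i ∈ C then d i else 0) ≤ wC C d :=
          Finset.single_le_sum (f := fun j => if j ∈ C then d j else 0)
            (fun j _ => Nat.zero_le _) (Finset.mem_univ i)
        rw [if_pos hiC] at this
        omega
      rw [wC_add]
      omega
    · intro x y hx hy b hb
      rcases Finset.mem_union.1 (MvPolynomial.support_add hb) with h | h
      · exact hx b h
      · exact hy b h

lemma colon_vId_pow_le (C : Set (Fin n)) (s : ℕ) (a : Fin n →₀ ℕ)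
    (ha : (a.sum fun _ t => t) < s) {f : MvPolynomial (Fin n) k}
    (hfa : f * monomial a 1 ∈ (vId C : Ideal (MvPolynomial (Fin n) k)) ^ s) :
    f ∈ vId C := by
  rw [mem_vId]
  intro b hb
  have hba : b + a ∈ (f * monomial a (1 : k)).support := by
    rw [mem_support_iff, coeff_mul_monomial, mul_one]
    exact mem_support_iff.1 hb
  have h1 : s ≤ wC C (b + a) := vId_pow_le C s hfa _ hba
  have h2 : wC C a ≤ a.sum fun _ t => t := wC_le_sum C a
  rw [wC_add] at h1
  exact wC_pos (by omega)

lemma prod_X_eq (F : Finset (Fin n)) :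
    (∏ i ∈ F, (X i : MvPolynomial (Fin n) k)) =
      monomial (∑ i ∈ F, Finsupp.single i 1) 1 := by
  induction F using Finset.cons_induction with
  | empty => simp
  | cons i F hi ih =>
    rw [Finset.prod_cons, Finset.sum_cons, ih, ← pow_one (X i : MvPolynomial (Fin n) k),
      X_pow_eq_monomial, monomial_mul, one_mul]

lemma indicator_apply (F : Finset (Fin n)) (i : Fin n) :
    (∑ j ∈ F, Finsupp.single j (1 : ℕ)) i = if i ∈ F then 1 else 0 := by
  rw [Finset.sum_apply']
  rw [Finset.sum_congr rfl fun j _ => Finsupp.single_apply]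
  exact Finset.sum_ite_eq' F i (fun _ => 1)

lemma span_sqfree_eq (A : Set (Finset (Fin n))) :
    Ideal.span ((fun F => ∏ i ∈ F, (X i : MvPolynomial (Fin n) k)) '' A) =
      Ideal.span ((fun a => monomial a (1 : k)) ''
        ((fun F => ∑ i ∈ F, Finsupp.single i 1) '' A)) := by
  rw [Set.image_image]
  congr 1
  exact Set.image_congr fun F _ => prod_X_eq F

lemma radical_le_self (A : Set (Finset (Fin n))) :
    (Ideal.span ((fun F => ∏ i ∈ F, (X i : MvPolynomial (Fin n) k)) '' A)).radical ≤
      Ideal.span ((fun F => ∏ i ∈ F, (X i : MvPolynomial (Fin n) k)) '' A) := by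
  intro f hf
  by_contra hfI
  rw [span_sqfree_eq, mem_span_monomials] at hfI
  push_neg at hfI
  obtain ⟨b, hb, hball⟩ := hfI
  set C : Set (Fin n) := {i | b i = 0} with hC
  have hIle : Ideal.span ((fun F => ∏ i ∈ F, (X i : MvPolynomial (Fin n) k)) '' A) ≤ vId C := by
    rw [span_sqfree_eq, Ideal.span_le]
    rintro _ ⟨_, ⟨F, hF, rfl⟩, rfl⟩
    show (monomial (∑ i ∈ F, Finsupp.single i 1) (1 : k)) ∈ vId C
    rw [mem_vId]
    intro b' hb'
    rw [support_monomial, if_neg (one_ne_zero)] at hb'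
    rw [Finset.mem_singleton] at hb'
    subst hb'
    show ∃ i ∈ C, (∑ j ∈ F, Finsupp.single j (1 : ℕ)) i ≠ 0
    have hnle := hball _ ⟨F, hF, rfl⟩
    rw [Finsupp.le_def] at hnle
    push_neg at hnle
    obtain ⟨i, hi⟩ := hnle
    have hind : ((fun F => ∑ j ∈ F, Finsupp.single j (1 : ℕ)) F) i = if i ∈ F then 1 else 0 :=
      indicator_apply F i
    simp only at hind
    rw [hind] at hi
    refine ⟨i, ?_, ?_⟩
    · show b i = 0
      by_cases hiF : i ∈ F
      · rw [if_pos hiF] at hi; omega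
      · rw [if_neg hiF] at hi; omega
    · rw [indicator_apply]
      by_cases hiF : i ∈ F
      · rw [if_pos hiF]; omega
      · rw [if_neg hiF] at hi; omega
  obtain ⟨m, hm⟩ := hf
  have : f ∈ vId C := (vId_isPrime C).mem_of_pow_mem m (hIle hm)
  obtain ⟨i, hiC, hbi⟩ := mem_vId.1 this b hb
  exact hbi hiC

lemma minPrime_eq_vId {A : Set (Finset (Fin n))} {q : Ideal (MvPolynomial (Fin n) k)}
    (hq : q ∈ (Ideal.span ((fun F => ∏ i ∈ F, (X i : MvPolynomial (Fin n) k)) '' A)).minimalPrimes) :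
    ∃ C : Set (Fin n), q = vId C := by
  haveI := hq.1.1
  refine ⟨{i | (X i : MvPolynomial (Fin n) k) ∈ q}, ?_⟩
  set C : Set (Fin n) := {i | (X i : MvPolynomial (Fin n) k) ∈ q} with hC
  have h1 : vId C ≤ q := by
    rw [vId, Ideal.span_le]
    rintro _ ⟨_, ⟨i, hiC, rfl⟩, rfl⟩
    show (monomial (Finsupp.single i 1) (1 : k)) ∈ q
    rw [← X_pow_eq_monomial, pow_one]
    exact hiC
  have h2 : Ideal.span ((fun F => ∏ i ∈ F, (X i : MvPolynomial (Fin n) k)) '' A) ≤ vId C := by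
    rw [Ideal.span_le]
    rintro _ ⟨F, hF, rfl⟩
    have hq' : (∏ i ∈ F, (X i : MvPolynomial (Fin n) k)) ∈ q :=
      hq.1.2 (Ideal.subset_span ⟨F, hF, rfl⟩)
    obtain ⟨i, hiF, hXi⟩ := Ideal.IsPrime.prod_mem_iff.1 hq'
    show (∏ j ∈ F, (X j : MvPolynomial (Fin n) k)) ∈ vId C
    rw [← Finset.mul_prod_erase F _ hiF]
    exact Ideal.mul_mem_right _ _ (X_mem_vId hXi)
  exact le_antisymm (hq.2 ⟨vId_isPrime C, h2⟩ h1) h1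

end Stmt8Aux
/-- for an intermediate ideal `I^s ⊆ J ⊆ I^(s)` and `|a| ≤ s-1`,
`√(J : x^a) = I`, equivalently `Δ_a(J) = Δ(I)`. -/
theorem stmt8 {k : Type*} [Field k] {n : ℕ}
    (I J : Ideal (MvPolynomial (Fin n) k)) (hI : IsSqFreeMonomialIdeal I)
    (hne : I ≠ ⊥) (s : ℕ) (hs : 1 ≤ s) (hJ : IsMonomialIdeal J)
    (h₁ : I ^ s ≤ J) (h₂ : J ≤ symbPow I s)
    (a : Fin n →₀ ℕ) (ha : (a.sum fun _ t => t) ≤ s - 1) :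
    (Submodule.colon J (Ideal.span {monomial a (1 : k)})).radical = I ∧
    degreeComplex J a = SRComplex I := by
  obtain ⟨A, hIA⟩ := hI
  have hrad : I.radical = I := by
    rw [hIA]
    exact le_antisymm (Stmt8Aux.radical_le_self A) Ideal.le_radical
  have key : (Submodule.colon J (Ideal.span {monomial a (1 : k)})).radical = I := by
    apply le_antisymm
    · intro f hf
      obtain ⟨m, hm⟩ := hf
      have hm2 : f ^ m * monomial a 1 ∈ J := Ideal.mem_colon_span_singleton.1 hm
      rw [← hrad, ← Ideal.sInf_minimalPrimes]
      rw [Submodule.mem_sInf]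
      intro q hq
      obtain ⟨C, rfl⟩ := Stmt8Aux.minPrime_eq_vId (hIA ▸ hq)
      have hsym : f ^ m * monomial a 1 ∈ symbPow I s := h₂ hm2
      rw [symbPow] at hsym
      have hpow : f ^ m * monomial a 1 ∈ (Stmt8Aux.vId C : Ideal (MvPolynomial (Fin n) k)) ^ s := by
        have h3 := Ideal.mem_iInf.1 hsym (Stmt8Aux.vId C)
        exact Ideal.mem_iInf.1 h3 hq
      have hfm : f ^ m ∈ Stmt8Aux.vId (k := k) C :=
        Stmt8Aux.colon_vId_pow_le C s a (by omega) hpow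
      exact (Stmt8Aux.vId_isPrime C).mem_of_pow_mem m hfm
    · intro f hf
      exact ⟨s, Ideal.mem_colon_span_singleton.2
        (Ideal.mul_mem_right _ _ (h₁ (Ideal.pow_mem_pow hf s)))⟩
  refine ⟨key, ?_⟩
  rw [degreeComplex, key]
end

section
/- Let G be a simple graph with edge ideal I = I(G), and let a ∈ ℕ^n with x^a = x_1 x_2. Then the radical of (I^(2) : x_1 x_2) equals (I : x_1) ∩ (I : x_2). -/
open MvPolynomial

section
variable {k : Type*} [Field k] {n : ℕ}
open scoped Classical

noncomputable def auxPhi (k : Type*) [Field k] {n : ℕ} (C : Set (Fin n)) :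
    MvPolynomial (Fin n) k →ₐ[k] MvPolynomial (Fin n) k :=
  aeval (fun i => if i ∈ C then 0 else X i)

noncomputable def auxPsi (k : Type*) [Field k] {n : ℕ} (C : Set (Fin n)) :
    MvPolynomial (Fin n) k →ₐ[k] Polynomial (MvPolynomial (Fin n) k) :=
  aeval (fun i => if i ∈ C then Polynomial.C (X i) * Polynomial.X else Polynomial.C (X i))

noncomputable def auxQ (k : Type*) [Field k] {n : ℕ} (C : Set (Fin n)) :
    Ideal (MvPolynomial (Fin n) k) :=
  Ideal.span (X '' C)

lemma sub_phi_mem (C : Set (Fin n)) (f : MvPolynomial (Fin n) k) :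
    f - auxPhi k C f ∈ auxQ k C := by
  induction f using MvPolynomial.induction_on with
  | C c => simp [auxPhi]
  | add f g hf hg =>
      have := add_mem hf hg
      rw [map_add]; convert this using 1; ring
  | mul_X f i hf =>
      by_cases hi : i ∈ C
      · have hXi : X (R := k) i ∈ auxQ k C := Ideal.subset_span ⟨i, hi, rfl⟩
        have h0 : auxPhi k C (f * X i) = 0 := by simp [auxPhi, hi]
        rw [h0, sub_zero]
        exact Ideal.mul_mem_left _ f hXi
      · have h0 : auxPhi k C (f * X i) = auxPhi k C f * X i := by simp [auxPhi, hi]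
        rw [h0]
        have := Ideal.mul_mem_right (X i) _ hf
        convert this using 1; ring

lemma mem_auxQ_iff {C : Set (Fin n)} {f : MvPolynomial (Fin n) k} :
    f ∈ auxQ k C ↔ auxPhi k C f = 0 := by
  constructor
  · intro hf
    have hle : auxQ k C ≤ RingHom.ker (auxPhi k C).toRingHom := by
      rw [auxQ, Ideal.span_le]
      rintro _ ⟨i, hi, rfl⟩
      simp [RingHom.mem_ker, auxPhi, hi]
    exact hle hf
  · intro h
    have := sub_phi_mem C f
    rwa [h, sub_zero] at this

lemma auxQ_prime (C : Set (Fin n)) : (auxQ k C).IsPrime := by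
  constructor
  · intro h
    have h1 : (1 : MvPolynomial (Fin n) k) ∈ auxQ k C := h ▸ Submodule.mem_top
    have := mem_auxQ_iff.1 h1
    rw [map_one] at this
    exact one_ne_zero this
  · intro a b hab
    rw [mem_auxQ_iff, mem_auxQ_iff]
    rw [mem_auxQ_iff, map_mul] at hab
    exact mul_eq_zero.1 hab

lemma coeff_zero_psi (C : Set (Fin n)) (f : MvPolynomial (Fin n) k) :
    (auxPsi k C f).coeff 0 = auxPhi k C f := by
  have hcomp : (Polynomial.evalRingHom (0 : MvPolynomial (Fin n) k)).comp
      (auxPsi k C).toRingHom = (auxPhi k C).toRingHom := by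
    apply MvPolynomial.ringHom_ext
    · intro c; simp [auxPsi, auxPhi]
    · intro i; by_cases hi : i ∈ C <;> simp [auxPsi, auxPhi, hi]
  have := RingHom.congr_fun hcomp f
  simpa [Polynomial.coeff_zero_eq_eval_zero] using this

example : (Finset.HasAntidiagonal.antidiagonal (1 : ℕ)) = {(0,1),(1,0)} := by decide

lemma sq_coeffs {C : Set (Fin n)} {f : MvPolynomial (Fin n) k} (hf : f ∈ auxQ k C ^ 2) :
    (auxPsi k C f).coeff 0 = 0 ∧ (auxPsi k C f).coeff 1 = 0 := by
  rw [pow_two] at hf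
  refine Submodule.mul_induction_on hf ?_ ?_
  · intro a ha b hb
    have ha0 : (auxPsi k C a).coeff 0 = 0 := by
      rw [coeff_zero_psi]; exact mem_auxQ_iff.1 ha
    have hb0 : (auxPsi k C b).coeff 0 = 0 := by
      rw [coeff_zero_psi]; exact mem_auxQ_iff.1 hb
    constructor
    · rw [map_mul, Polynomial.mul_coeff_zero, ha0, zero_mul]
    · rw [map_mul, Polynomial.coeff_mul]
      have : (Finset.HasAntidiagonal.antidiagonal (1 : ℕ)) = {(0,1),(1,0)} := by decide
      rw [this]
      simp [ha0, hb0]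
  · intro x y hx hy
    simp [map_add, hx.1, hx.2, hy.1, hy.2]

lemma primary_step {C : Set (Fin n)} {v : Fin n} (hv : v ∈ C)
    {b : MvPolynomial (Fin n) k} (hb : auxPhi k C b ≠ 0)
    (hab : X v * b ∈ auxQ k C ^ 2) : False := by
  obtain ⟨h0, h1⟩ := sq_coeffs hab
  have hXv : auxPsi k C (X v) = Polynomial.C (X v) * Polynomial.X := by
    simp [auxPsi, hv]
  rw [map_mul, Polynomial.coeff_mul] at h1
  have hanti : (Finset.HasAntidiagonal.antidiagonal (1 : ℕ)) = {(0,1),(1,0)} := by decide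
  rw [hanti] at h1
  simp [hXv, coeff_zero_psi] at h1
  exact hb h1
lemma X_mul_X_eq (i j : Fin n) :
    (X i * X j : MvPolynomial (Fin n) k)
      = monomial (Finsupp.single i 1 + Finsupp.single j 1) (1 : k) := by
  rw [X, X, monomial_mul, one_mul]

lemma edgeIdeal_eq_span_monomial (G : SimpleGraph (Fin n)) :
    edgeIdeal k G = Ideal.span ((fun a => monomial a (1 : k)) ''
      {m | ∃ i j, G.Adj i j ∧ m = Finsupp.single i 1 + Finsupp.single j 1}) := by
  unfold edgeIdeal
  congr 1
  ext f
  constructor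
  · rintro ⟨i, j, hij, rfl⟩
    exact ⟨_, ⟨i, j, hij, rfl⟩, (X_mul_X_eq i j).symm⟩
  · rintro ⟨m, ⟨i, j, hij, rfl⟩, rfl⟩
    exact ⟨i, j, hij, (X_mul_X_eq i j).symm⟩

lemma radical_edgeIdeal_le (G : SimpleGraph (Fin n)) :
    (edgeIdeal k G).radical ≤ edgeIdeal k G := by
  intro g hg
  by_contra hgI
  rw [edgeIdeal_eq_span_monomial, mem_ideal_span_monomial_image] at hgI
  push_neg at hgI
  obtain ⟨m0, hm0supp, hm0⟩ := hgI
  set C0 : Set (Fin n) := {i | m0 i = 0} with hC0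
  have hIq : edgeIdeal k G ≤ auxQ k C0 := by
    rw [edgeIdeal, Ideal.span_le]
    rintro _ ⟨i, j, hij, rfl⟩
    have hor : m0 i = 0 ∨ m0 j = 0 := by
      by_contra hc
      push_neg at hc
      obtain ⟨hc1, hc2⟩ := hc
      have hne := G.ne_of_adj hij
      refine hm0 _ ⟨i, j, hij, rfl⟩ ?_
      rw [Finsupp.le_def]
      intro l
      rw [Finsupp.add_apply, Finsupp.single_apply, Finsupp.single_apply]
      split_ifs with hil hjl hjl
      · exact absurd (hil.trans hjl.symm) hne
      · subst hil; omega
      · subst hjl; omega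
      · omega
    rcases hor with h | h
    · exact Ideal.mul_mem_right _ _ (Ideal.subset_span ⟨i, h, rfl⟩)
    · exact Ideal.mul_mem_left _ _ (Ideal.subset_span ⟨j, h, rfl⟩)
  have hgq : g ∈ auxQ k C0 := by
    rw [Ideal.radical_eq_sInf] at hg
    exact (Ideal.mem_sInf.1 hg) ⟨hIq, auxQ_prime C0⟩
  rw [auxQ, mem_ideal_span_X_image] at hgq
  obtain ⟨i, hiC0, hi⟩ := hgq m0 hm0supp
  exact hi hiC0

lemma minPrime_eq (G : SimpleGraph (Fin n)) (p : Ideal (MvPolynomial (Fin n) k))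
    (hp : p ∈ (edgeIdeal k G).minimalPrimes) :
    p = auxQ k {i | X i ∈ p} := by
  have hqp : auxQ k {i | X i ∈ p} ≤ p := by
    rw [auxQ, Ideal.span_le]
    rintro _ ⟨i, hi, rfl⟩
    exact hi
  have hI : edgeIdeal k G ≤ auxQ k {i | X i ∈ p} := by
    rw [edgeIdeal, Ideal.span_le]
    rintro _ ⟨i, j, hij, rfl⟩
    have hprime : p.IsPrime := hp.1.1
    have hmem : X i * X j ∈ p := hp.1.2 (Ideal.subset_span ⟨i, j, hij, rfl⟩)
    rcases hprime.mem_or_mem hmem with h | h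
    · exact Ideal.mul_mem_right _ _ (Ideal.subset_span ⟨i, h, rfl⟩)
    · exact Ideal.mul_mem_left _ _ (Ideal.subset_span ⟨j, h, rfl⟩)
  exact le_antisymm (hp.2 ⟨auxQ_prime _, hI⟩ hqp) hqp

end

/-- `√(I^(2) : x₁x₂) = (I : x₁) ∩ (I : x₂)`. -/
theorem stmt11 {k : Type*} [Field k] {n : ℕ} (G : SimpleGraph (Fin n))
    (v₁ v₂ : Fin n) (hv : v₁ ≠ v₂) :
    (Submodule.colon (symbPow (edgeIdeal k G) 2)
        (Ideal.span {(X v₁ * X v₂ : MvPolynomial (Fin n) k)})).radical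
      = Submodule.colon (edgeIdeal k G) (Ideal.span {(X v₁ : MvPolynomial (Fin n) k)})
        ⊓ Submodule.colon (edgeIdeal k G) (Ideal.span {(X v₂ : MvPolynomial (Fin n) k)}) := by
  apply le_antisymm
  · intro x hx
    obtain ⟨N, hN⟩ := hx
    rw [Ideal.mem_colon_span_singleton] at hN
    have key : ∀ p ∈ (edgeIdeal k G).minimalPrimes, X v₁ * x ∈ p ∧ X v₂ * x ∈ p := by
      intro p hp
      have hp2 : x ^ N * (X v₁ * X v₂) ∈ p ^ 2 := by
        rw [symbPow] at hN
        exact (Submodule.mem_iInf _).1 ((Submodule.mem_iInf _).1 hN p) hp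
      have hpq := minPrime_eq G p hp
      set C : Set (Fin n) := {i | X i ∈ p} with hC
      rw [hpq] at hp2 ⊢
      have hXmem : ∀ w : Fin n, w ∈ C → X (R := k) w ∈ auxQ k C := by
        intro w hw; exact Ideal.subset_span ⟨w, hw, rfl⟩
      have hXnot : ∀ w : Fin n, w ∉ C → auxPhi k C (X w) = X w := by
        intro w hw; simp [auxPhi, hw]
      by_cases h1 : v₁ ∈ C <;> by_cases h2 : v₂ ∈ C
      · exact ⟨Ideal.mul_mem_right _ _ (hXmem _ h1), Ideal.mul_mem_right _ _ (hXmem _ h2)⟩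
      · -- v₁ ∈ C, v₂ ∉ C
        have hxq : x ∈ auxQ k C := by
          by_contra hxq
          refine primary_step h1 (b := x ^ N * X v₂) ?_ ?_
          · rw [map_mul, map_pow, hXnot _ h2]
            exact mul_ne_zero (pow_ne_zero _ (fun h => hxq (mem_auxQ_iff.2 h)))
              (MvPolynomial.X_ne_zero v₂)
          · have : X (R := k) v₁ * (x ^ N * X v₂) = x ^ N * (X v₁ * X v₂) := by ring
            rw [this]; exact hp2
        exact ⟨Ideal.mul_mem_right _ _ (hXmem _ h1), Ideal.mul_mem_left _ _ hxq⟩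
      · -- v₁ ∉ C, v₂ ∈ C
        have hxq : x ∈ auxQ k C := by
          by_contra hxq
          refine primary_step h2 (b := x ^ N * X v₁) ?_ ?_
          · rw [map_mul, map_pow, hXnot _ h1]
            exact mul_ne_zero (pow_ne_zero _ (fun h => hxq (mem_auxQ_iff.2 h)))
              (MvPolynomial.X_ne_zero v₁)
          · have : X (R := k) v₂ * (x ^ N * X v₁) = x ^ N * (X v₁ * X v₂) := by ring
            rw [this]; exact hp2
        exact ⟨Ideal.mul_mem_left _ _ hxq, Ideal.mul_mem_right _ _ (hXmem _ h2)⟩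
      · -- neither
        have hprime := auxQ_prime (k := k) C
        have hmem : x ^ N * (X v₁ * X v₂) ∈ auxQ k C :=
          Ideal.pow_le_self two_ne_zero hp2
        have hxq : x ∈ auxQ k C := by
          rcases hprime.mem_or_mem hmem with h | h
          · exact hprime.mem_of_pow_mem _ h
          · rcases hprime.mem_or_mem h with h' | h'
            · exact absurd (mem_auxQ_iff.1 h') (by rw [hXnot _ h1]; exact MvPolynomial.X_ne_zero v₁)
            · exact absurd (mem_auxQ_iff.1 h') (by rw [hXnot _ h2]; exact MvPolynomial.X_ne_zero v₂)
        exact ⟨Ideal.mul_mem_left _ _ hxq, Ideal.mul_mem_left _ _ hxq⟩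
    have hrad : ∀ y : MvPolynomial (Fin n) k,
        (∀ p ∈ (edgeIdeal k G).minimalPrimes, y ∈ p) → y ∈ edgeIdeal k G := by
      intro y hy
      apply radical_edgeIdeal_le G
      rw [← Ideal.sInf_minimalPrimes]
      exact Ideal.mem_sInf.2 fun {J} hJ => hy J hJ
    rw [Submodule.mem_inf, Ideal.mem_colon_span_singleton, Ideal.mem_colon_span_singleton]
    constructor
    · have := hrad (X v₁ * x) fun p hp => (key p hp).1
      rwa [mul_comm] at this
    · have := hrad (X v₂ * x) fun p hp => (key p hp).2
      rwa [mul_comm] at this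
  · intro x hx
    rw [Submodule.mem_inf, Ideal.mem_colon_span_singleton, Ideal.mem_colon_span_singleton] at hx
    obtain ⟨h1, h2⟩ := hx
    refine ⟨2, ?_⟩
    rw [Ideal.mem_colon_span_singleton, symbPow]
    refine (Submodule.mem_iInf _).2 fun p => (Submodule.mem_iInf _).2 fun hp => ?_
    have heq : x ^ 2 * (X v₁ * X v₂) = (x * X v₁) * (x * X v₂) := by ring
    rw [heq, pow_two]
    exact Ideal.mul_mem_mul (hp.1.2 h1) (hp.1.2 h2)
end

section
/- Let G be a simple graph with edge ideal I = I(G). Then √(I^(3) : x_1 x_2 x_3) = (I : x_1) ∩ (I : x_2) ∩ (I : x_3). -/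
open MvPolynomial

namespace Stmt13Aux

open MvPolynomial

variable {k : Type*} [Field k] {n : ℕ}

open Classical in
/-- weight of an exponent with respect to a set of variables -/
noncomputable def wtC {n : ℕ} (C : Set (Fin n)) (a : Fin n →₀ ℕ) : ℕ :=
  a.sum fun i t => if i ∈ C then t else 0

lemma wtC_add {C : Set (Fin n)} (a b : Fin n →₀ ℕ) :
    wtC C (a + b) = wtC C a + wtC C b :=
  Finsupp.sum_add_index' (fun i => by simp) (fun i t1 t2 => by split <;> simp)

open Classical in
lemma wtC_single {C : Set (Fin n)} (i : Fin n) (t : ℕ) :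
    wtC C (Finsupp.single i t) = if i ∈ C then t else 0 :=
  Finsupp.sum_single_index (by simp)

lemma exists_of_wtC_pos {C : Set (Fin n)} {b : Fin n →₀ ℕ} (h : 1 ≤ wtC C b) :
    ∃ i ∈ C, b i ≠ 0 := by
  classical
  have h' : wtC C b ≠ 0 := by omega
  obtain ⟨i, hi, hne⟩ := Finset.exists_ne_zero_of_sum_ne_zero h'
  refine ⟨i, ?_, Finsupp.mem_support_iff.mp hi⟩
  by_contra hc; simp [hc] at hne

/-- Ideal of polynomials all of whose monomials satisfy a superset-closed condition. -/
def monIdeal (Q : (Fin n →₀ ℕ) → Prop) (hQ : ∀ a b, Q b → Q (a + b)) :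
    Ideal (MvPolynomial (Fin n) k) where
  carrier := {f | ∀ b ∈ f.support, Q b}
  zero_mem' := by simp
  add_mem' := by
    intro f g hf hg b hb
    rcases Finset.mem_union.mp (MvPolynomial.support_add hb) with h | h
    · exact hf b h
    · exact hg b h
  smul_mem' := by
    classical
    intro r f hf b hb
    have hb' : b ∈ (r * f).support := by simpa [smul_eq_mul] using hb
    rcases Finset.mem_add.mp (MvPolynomial.support_mul r f hb') with ⟨c, hc, d, hd, rfl⟩
    exact hQ c d (hf d hd)

noncomputable def Jw (k : Type*) [Field k] {n : ℕ} (C : Set (Fin n)) (s : ℕ) :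
    Ideal (MvPolynomial (Fin n) k) :=
  monIdeal (fun b => s ≤ wtC C b)
    (fun a b h => by simp only [wtC_add]; omega)

noncomputable def PC (k : Type*) [Field k] {n : ℕ} (C : Set (Fin n)) :
    Ideal (MvPolynomial (Fin n) k) :=
  Ideal.span ((fun i => (X i : MvPolynomial (Fin n) k)) '' C)

lemma X_mem_PC {C : Set (Fin n)} {i : Fin n} (hi : i ∈ C) :
    (X i : MvPolynomial (Fin n) k) ∈ PC k C :=
  Ideal.subset_span ⟨i, hi, rfl⟩

lemma PC_le_Jw (C : Set (Fin n)) : PC k C ≤ Jw k C 1 := by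
  classical
  rw [PC, Ideal.span_le]
  rintro f ⟨i, hi, rfl⟩
  intro b hb
  rw [MvPolynomial.support_X, Finset.mem_singleton] at hb
  subst hb
  show 1 ≤ wtC C _
  rw [wtC_single, if_pos hi]

lemma Jw_mul (C : Set (Fin n)) (s t : ℕ) : Jw k C s * Jw k C t ≤ Jw k C (s + t) := by
  rw [Ideal.mul_le]
  intro f hf g hg b hb
  classical
  rcases Finset.mem_add.mp (MvPolynomial.support_mul f g hb) with ⟨c, hc, d, hd, rfl⟩
  have h1 := hf c hc; have h2 := hg d hd
  simp only [Jw, monIdeal] at h1 h2 ⊢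
  rw [wtC_add]; omega

lemma PC_pow_le_Jw (C : Set (Fin n)) (s : ℕ) : PC k C ^ s ≤ Jw k C s := by
  induction s with
  | zero => intro f _; intro b _; exact Nat.zero_le _
  | succ s ih =>
      rw [pow_succ]
      calc PC k C ^ s * PC k C ≤ Jw k C s * Jw k C 1 :=
            Ideal.mul_mono ih (PC_le_Jw C)
        _ ≤ Jw k C (s + 1) := Jw_mul C s 1

lemma monomial_eq_mul {b e : Fin n →₀ ℕ} (h : e ≤ b) (c : k) :
    (monomial b c : MvPolynomial (Fin n) k) = monomial e 1 * monomial (b - e) c := by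
  rw [monomial_mul, one_mul, add_tsub_cancel_of_le h]

lemma monomial_mem_PC {C : Set (Fin n)} {b : Fin n →₀ ℕ} {i : Fin n}
    (hi : i ∈ C) (hb : b i ≠ 0) (c : k) :
    (monomial b c : MvPolynomial (Fin n) k) ∈ PC k C := by
  have hle : Finsupp.single i 1 ≤ b := by rw [Finsupp.single_le_iff]; omega
  rw [monomial_eq_mul hle c]
  have hX : (monomial (Finsupp.single i 1) 1 : MvPolynomial (Fin n) k) = X i := rfl
  rw [hX]
  exact Ideal.mul_mem_right _ _ (X_mem_PC hi)

/-- a polynomial each of whose monomials has positive C-weight lies in PC -/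
lemma mem_PC_of_wt {C : Set (Fin n)} {f : MvPolynomial (Fin n) k}
    (h : ∀ b ∈ f.support, 1 ≤ wtC C b) : f ∈ PC k C := by
  classical
  rw [← MvPolynomial.support_sum_monomial_coeff f]
  refine Ideal.sum_mem _ ?_
  intro b hb
  obtain ⟨i, hi, hbi⟩ := exists_of_wtC_pos (h b hb)
  exact monomial_mem_PC hi hbi _

/-- PC is prime -/
lemma PC_isPrime (C : Set (Fin n)) : (PC k C : Ideal (MvPolynomial (Fin n) k)).IsPrime := by
  classical
  set σ : Fin n → MvPolynomial (Fin n) k := fun i => if i ∈ C then 0 else X i with hσ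
  set φ : MvPolynomial (Fin n) k →ₐ[k] MvPolynomial (Fin n) k := aeval σ with hφ
  have hker : ∀ g ∈ PC k C, φ g = 0 := by
    intro g hg
    have : PC k C ≤ RingHom.ker (φ : MvPolynomial (Fin n) k →+* MvPolynomial (Fin n) k) := by
      rw [PC, Ideal.span_le]
      rintro f ⟨i, hi, rfl⟩
      simp [RingHom.mem_ker, hφ, hσ, hi]
    exact this hg
  have hsub : ∀ f : MvPolynomial (Fin n) k, f - φ f ∈ PC k C := by
    intro f
    induction f using MvPolynomial.induction_on with
    | C a => simp [hφ]
    | add f g hf hg =>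
        have : f + g - φ (f + g) = (f - φ f) + (g - φ g) := by rw [map_add]; ring
        rw [this]; exact Ideal.add_mem _ hf hg
    | mul_X f i hf =>
        rw [map_mul]
        by_cases hi : i ∈ C
        · have : φ (X i) = 0 := by simp [hφ, hσ, hi]
          rw [this, mul_zero, sub_zero]
          exact Ideal.mul_mem_left _ f (X_mem_PC hi)
        · have : φ (X i) = X i := by simp [hφ, hσ, hi]
          rw [this]
          have : f * X i - φ f * X i = (f - φ f) * X i := by ring
          rw [this]
          exact Ideal.mul_mem_right _ _ hf
  constructor
  · intro h
    have h1 : (1 : MvPolynomial (Fin n) k) ∈ PC k C := h ▸ Submodule.mem_top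
    have := hker 1 h1
    simp at this
  · intro f g hfg
    have : φ f * φ g = 0 := by rw [← map_mul]; exact hker _ hfg
    rcases mul_eq_zero.mp this with h | h
    · left; have := hsub f; rwa [h, sub_zero] at this
    · right; have := hsub g; rwa [h, sub_zero] at this

lemma X_mem_PC_iff {C : Set (Fin n)} {i : Fin n} :
    (X i : MvPolynomial (Fin n) k) ∈ PC k C ↔ i ∈ C := by
  classical
  refine ⟨fun h => ?_, X_mem_PC⟩
  have hb : Finsupp.single i 1 ∈ (X i : MvPolynomial (Fin n) k).support := by
    rw [MvPolynomial.support_X]; exact Finset.mem_singleton_self _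
  have h1 : 1 ≤ wtC C (Finsupp.single i 1) := PC_le_Jw C h _ hb
  rw [wtC_single] at h1
  by_contra hc
  rw [if_neg hc] at h1
  omega

def EdgeCond (G : SimpleGraph (Fin n)) (b : Fin n →₀ ℕ) : Prop :=
  ∃ i j, G.Adj i j ∧ 1 ≤ b i ∧ 1 ≤ b j

lemma edgeCond_add (G : SimpleGraph (Fin n)) (a b : Fin n →₀ ℕ) (h : EdgeCond G b) :
    EdgeCond G (a + b) := by
  obtain ⟨i, j, hij, hi, hj⟩ := h
  exact ⟨i, j, hij, by simp; omega, by simp; omega⟩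

noncomputable def Jedge (k : Type*) [Field k] {n : ℕ} (G : SimpleGraph (Fin n)) :
    Ideal (MvPolynomial (Fin n) k) :=
  monIdeal (EdgeCond G) (edgeCond_add G)

lemma X_mul_X (i j : Fin n) :
    (X i * X j : MvPolynomial (Fin n) k)
      = monomial (Finsupp.single i 1 + Finsupp.single j 1) 1 := by
  rw [show (X i : MvPolynomial (Fin n) k) = monomial (Finsupp.single i 1) 1 from rfl,
    show (X j : MvPolynomial (Fin n) k) = monomial (Finsupp.single j 1) 1 from rfl,
    monomial_mul, one_mul]

end Stmt13Aux


namespace Stmt13Aux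

open MvPolynomial

variable {k : Type*} [Field k] {n : ℕ}

lemma edgeIdeal_eq_Jedge (G : SimpleGraph (Fin n)) :
    edgeIdeal k G = Jedge k G := by
  classical
  apply le_antisymm
  · rw [edgeIdeal, Ideal.span_le]
    rintro f ⟨i, j, hij, rfl⟩
    intro b hb
    rw [X_mul_X, MvPolynomial.support_monomial, if_neg one_ne_zero,
      Finset.mem_singleton] at hb
    subst hb
    refine ⟨i, j, hij, ?_, ?_⟩ <;>
      simp [Finsupp.single_apply, hij.ne, hij.ne']
  · intro f hf
    rw [← MvPolynomial.support_sum_monomial_coeff f]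
    refine Ideal.sum_mem _ ?_
    intro b hb
    obtain ⟨i, j, hij, hi, hj⟩ := hf b hb
    have hne : i ≠ j := hij.ne
    have hle : Finsupp.single i 1 + Finsupp.single j 1 ≤ b := by
      rw [Finsupp.le_def]
      intro l
      simp only [Finsupp.add_apply, Finsupp.single_apply]
      by_cases h1 : i = l
      · subst h1
        rw [if_pos rfl, if_neg (Ne.symm hne)]
        omega
      · by_cases h2 : j = l
        · subst h2
          rw [if_neg h1, if_pos rfl]
          omega
        · rw [if_neg h1, if_neg h2]
          omega
    rw [monomial_eq_mul hle, ← X_mul_X]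
    exact Ideal.mul_mem_right _ _ (Ideal.subset_span ⟨i, j, hij, rfl⟩)

/-- structure of minimal primes of the edge ideal -/
lemma minP_structure {G : SimpleGraph (Fin n)} {p : Ideal (MvPolynomial (Fin n) k)}
    (hp : p ∈ (edgeIdeal k G).minimalPrimes) :
    p = PC k {i | (X i : MvPolynomial (Fin n) k) ∈ p} := by
  have hprime : p.IsPrime := hp.1.1
  have hIle : edgeIdeal k G ≤ p := hp.1.2
  set C := {i | (X i : MvPolynomial (Fin n) k) ∈ p} with hC
  have hPCle : PC k C ≤ p := by
    rw [PC, Ideal.span_le]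
    rintro f ⟨i, hi, rfl⟩
    exact hi
  have hIPC : edgeIdeal k G ≤ PC k C := by
    rw [edgeIdeal, Ideal.span_le]
    rintro f ⟨i, j, hij, rfl⟩
    have hmem : (X i * X j : MvPolynomial (Fin n) k) ∈ p :=
      hIle (Ideal.subset_span ⟨i, j, hij, rfl⟩)
    rcases hprime.mem_or_mem hmem with h | h
    · exact Ideal.mul_mem_right _ _ (X_mem_PC h)
    · exact Ideal.mul_mem_left _ _ (X_mem_PC h)
  exact le_antisymm (hp.2 ⟨PC_isPrime C, hIPC⟩ hPCle) hPCle

/-- the edge ideal is a radical ideal -/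
lemma edge_radical (G : SimpleGraph (Fin n)) :
    (edgeIdeal k G).radical = edgeIdeal k G := by
  classical
  refine le_antisymm ?_ Ideal.le_radical
  rw [← Ideal.sInf_minimalPrimes]
  intro f hf
  rw [edgeIdeal_eq_Jedge]
  intro b hb
  by_contra hcon
  set C := {i : Fin n | b i = 0} with hC
  have hcover : edgeIdeal k G ≤ PC k C := by
    rw [edgeIdeal, Ideal.span_le]
    rintro g ⟨i, j, hij, rfl⟩
    by_cases hi : b i = 0
    · exact Ideal.mul_mem_right _ _ (X_mem_PC hi)
    · by_cases hj : b j = 0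
      · exact Ideal.mul_mem_left _ _ (X_mem_PC hj)
      · exact absurd ⟨i, j, hij, by omega, by omega⟩ hcon
  haveI : (PC k C : Ideal (MvPolynomial (Fin n) k)).IsPrime := PC_isPrime C
  obtain ⟨p, hpmin, hple⟩ := Ideal.exists_minimalPrimes_le hcover
  have hfp : f ∈ p := Submodule.mem_sInf.mp hf p hpmin
  rw [minP_structure hpmin] at hfp
  have hwt := PC_le_Jw _ hfp b hb
  obtain ⟨i, hiC', hbi⟩ := exists_of_wtC_pos hwt
  have hXi : (X i : MvPolynomial (Fin n) k) ∈ PC k C := hple hiC'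
  exact hbi ((X_mem_PC_iff.mp hXi : b i = 0))

/-- colon computation -/
lemma colon_PC_le {C : Set (Fin n)} {E : Fin n →₀ ℕ} (hE : wtC C E ≤ 2)
    {g : MvPolynomial (Fin n) k} (hg : g * monomial E 1 ∈ PC k C ^ 3) :
    g ∈ PC k C := by
  classical
  refine mem_PC_of_wt ?_
  intro b hb
  by_contra hw
  have hw0 : wtC C b = 0 := by omega
  have hmem : b + E ∈ (g * monomial E (1 : k)).support := by
    rw [MvPolynomial.mem_support_iff, MvPolynomial.coeff_mul_monomial, mul_one]
    exact MvPolynomial.mem_support_iff.mp hb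
  have h3 := PC_pow_le_Jw C 3 hg (b + E) hmem
  have h3' : 3 ≤ wtC C (b + E) := h3
  rw [wtC_add] at h3'
  omega

end Stmt13Aux

/-- `√(I^(3) : x₁x₂x₃) = (I : x₁) ∩ (I : x₂) ∩ (I : x₃)`. -/
theorem stmt13 {k : Type*} [Field k] {n : ℕ} (G : SimpleGraph (Fin n))
    (v₁ v₂ v₃ : Fin n) (h₁₂ : v₁ ≠ v₂) (h₁₃ : v₁ ≠ v₃) (h₂₃ : v₂ ≠ v₃) :
    (Submodule.colon (symbPow (edgeIdeal k G) 3)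
        (Ideal.span {X v₁ * X v₂ * X v₃} : Ideal (MvPolynomial (Fin n) k))).radical
      = Submodule.colon (edgeIdeal k G) (Ideal.span {X v₁} : Ideal (MvPolynomial (Fin n) k))
        ⊓ Submodule.colon (edgeIdeal k G) (Ideal.span {X v₂} : Ideal (MvPolynomial (Fin n) k))
        ⊓ Submodule.colon (edgeIdeal k G) (Ideal.span {X v₃} : Ideal (MvPolynomial (Fin n) k)) := by
  classical
  open Stmt13Aux in
  set I := edgeIdeal k G with hI
  set E : Fin n →₀ ℕ := Finsupp.single v₁ 1 + Finsupp.single v₂ 1 + Finsupp.single v₃ 1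
    with hE
  have hmE : (X v₁ * X v₂ * X v₃ : MvPolynomial (Fin n) k) = monomial E 1 := by
    rw [X_mul_X, hE,
      show (X v₃ : MvPolynomial (Fin n) k) = monomial (Finsupp.single v₃ 1) 1 from rfl,
      monomial_mul, one_mul]
  have hsymb : ∀ f : MvPolynomial (Fin n) k,
      f ∈ symbPow I 3 ↔ ∀ p ∈ I.minimalPrimes, f ∈ p ^ 3 := by
    intro f
    rw [symbPow]
    constructor
    · intro h p hp
      exact (Submodule.mem_iInf _).mp ((Submodule.mem_iInf _).mp h p) hp
    · intro h
      exact (Submodule.mem_iInf _).mpr fun p => (Submodule.mem_iInf _).mpr fun hp => h p hp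
  have key : ∀ p ∈ I.minimalPrimes, ∀ v : Fin n, (v = v₁ ∨ v = v₂ ∨ v = v₃) →
      (X v : MvPolynomial (Fin n) k) ∉ p →
      ∀ g : MvPolynomial (Fin n) k, g * monomial E 1 ∈ p ^ 3 → g ∈ p := by
    intro p hp v hv hXv g hg
    have hpC := minP_structure hp
    set C := {i : Fin n | (X i : MvPolynomial (Fin n) k) ∈ p} with hC
    have hvC : v ∉ C := hXv
    have hwtE : wtC C E ≤ 2 := by
      rw [hE, wtC_add, wtC_add, wtC_single, wtC_single, wtC_single]
      have t : ∀ w : Fin n, (if w ∈ C then (1 : ℕ) else 0) ≤ 1 := fun w => by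
        split <;> omega
      rcases hv with rfl | rfl | rfl
      · rw [if_neg hvC]; have := t v₂; have := t v₃; omega
      · rw [if_neg hvC]; have := t v₁; have := t v₃; omega
      · rw [if_neg hvC]; have := t v₁; have := t v₂; omega
    rw [hpC] at hg ⊢
    exact colon_PC_le hwtE hg
  ext f
  simp only [Submodule.mem_inf]
  constructor
  · intro hf
    obtain ⟨N, hN⟩ := Ideal.mem_radical_iff.mp hf
    rw [Ideal.mem_colon_span_singleton] at hN
    have hmain : ∀ v : Fin n, (v = v₁ ∨ v = v₂ ∨ v = v₃) → f * X v ∈ I := by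
      intro v hv
      have hallp : ∀ p ∈ I.minimalPrimes, f * X v ∈ p := by
        intro p hp
        by_cases hXv : (X v : MvPolynomial (Fin n) k) ∈ p
        · exact Ideal.mul_mem_left _ _ hXv
        · have h3 : f ^ N * (X v₁ * X v₂ * X v₃) ∈ p ^ 3 := (hsymb _).mp hN p hp
          rw [hmE] at h3
          have hfN : f ^ N ∈ p := key p hp v hv hXv _ h3
          exact Ideal.mul_mem_right _ _ (hp.1.1.mem_of_pow_mem _ hfN)
      have hrad : f * X v ∈ I.radical := by
        rw [← Ideal.sInf_minimalPrimes]
        exact Submodule.mem_sInf.mpr hallp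
      rwa [edge_radical] at hrad
    exact ⟨⟨Ideal.mem_colon_span_singleton.mpr (hmain v₁ (Or.inl rfl)),
      Ideal.mem_colon_span_singleton.mpr (hmain v₂ (Or.inr (Or.inl rfl)))⟩,
      Ideal.mem_colon_span_singleton.mpr (hmain v₃ (Or.inr (Or.inr rfl)))⟩
  · rintro ⟨⟨h1, h2⟩, h3⟩
    refine Ideal.mem_radical_iff.mpr ⟨3, ?_⟩
    rw [Ideal.mem_colon_span_singleton]
    refine (hsymb _).mpr ?_
    intro p hp
    by_cases hall : (X v₁ : MvPolynomial (Fin n) k) ∈ p ∧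
        (X v₂ : MvPolynomial (Fin n) k) ∈ p ∧ (X v₃ : MvPolynomial (Fin n) k) ∈ p
    · have hm3 : (X v₁ * X v₂ * X v₃ : MvPolynomial (Fin n) k) ∈ p ^ 3 := by
        rw [pow_succ, pow_succ, pow_one]
        exact Ideal.mul_mem_mul (Ideal.mul_mem_mul hall.1 hall.2.1) hall.2.2
      exact Ideal.mul_mem_left _ _ hm3
    · have hex : ∃ v : Fin n, (X v : MvPolynomial (Fin n) k) ∉ p ∧ f * X v ∈ I := by
        by_cases k1 : (X v₁ : MvPolynomial (Fin n) k) ∈ p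
        · by_cases k2 : (X v₂ : MvPolynomial (Fin n) k) ∈ p
          · by_cases k3 : (X v₃ : MvPolynomial (Fin n) k) ∈ p
            · exact absurd ⟨k1, k2, k3⟩ hall
            · exact ⟨v₃, k3, Ideal.mem_colon_span_singleton.mp h3⟩
          · exact ⟨v₂, k2, Ideal.mem_colon_span_singleton.mp h2⟩
        · exact ⟨v₁, k1, Ideal.mem_colon_span_singleton.mp h1⟩
      obtain ⟨v, hXv, hfv⟩ := hex
      have hfp : f ∈ p := by
        have hmem : f * X v ∈ p := hp.1.2 hfv
        rcases hp.1.1.mem_or_mem hmem with h | h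
        · exact h
        · exact absurd h hXv
      exact Ideal.mul_mem_right _ _ (Ideal.pow_mem_pow hfp 3)
end

section
/- Let G be a simple graph with edge ideal I = I(G). Then √(I^(3) : x_1² x_2 x_3) = (I : x_1) ∩ (I : x_2 x_3). -/
open MvPolynomial

section Aux

open MvPolynomial Finsupp

variable {k : Type*} [Field k] {n : ℕ}

/-- Weight of an exponent vector with respect to a set of variables. -/
def wtC (C : Finset (Fin n)) (b : Fin n →₀ ℕ) : ℕ := ∑ i ∈ C, b i

lemma wtC_add (C : Finset (Fin n)) (a b : Fin n →₀ ℕ) :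
    wtC C (a + b) = wtC C a + wtC C b := by
  simp [wtC, Finset.sum_add_distrib]

lemma wtC_single (C : Finset (Fin n)) (v : Fin n) (t : ℕ) [Decidable (v ∈ C)] :
    wtC C (Finsupp.single v t) = if v ∈ C then t else 0 := by
  classical
  simp [wtC, Finsupp.single_apply, Finset.sum_ite_eq]

/-- The prime generated by the variables in `C`. -/
noncomputable def PC (k : Type*) [Field k] {n : ℕ} (C : Finset (Fin n)) :
    Ideal (MvPolynomial (Fin n) k) :=
  Ideal.span ((fun i => (X i : MvPolynomial (Fin n) k)) '' ↑C)

lemma X_as_monomial (i : Fin n) :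
    (X i : MvPolynomial (Fin n) k) = monomial (Finsupp.single i 1) 1 := rfl

lemma mem_PC_wt {C : Finset (Fin n)} {f : MvPolynomial (Fin n) k} (hf : f ∈ PC k C) :
    ∀ b ∈ f.support, 1 ≤ wtC C b := by
  classical
  induction hf using Submodule.span_induction with
  | mem x hx =>
    obtain ⟨i, hi, rfl⟩ := hx
    intro b hb
    rw [support_X] at hb
    simp only [Finset.mem_singleton] at hb
    subst hb
    rw [wtC_single]
    simp only [Finset.mem_coe] at hi
    simp [hi]
  | zero => simp
  | add x y hx hy ihx ihy =>
    intro b hb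
    rcases Finset.mem_union.1 (MvPolynomial.support_add hb) with h | h
    · exact ihx b h
    · exact ihy b h
  | smul r x hx ih =>
    intro b hb
    have hb' : b ∈ (r * x).support := by simpa [smul_eq_mul] using hb
    rcases Finset.mem_add.1 (support_mul r x hb') with ⟨c, _, d, hd, rfl⟩
    have := ih d hd
    rw [wtC_add]
    omega

lemma mem_PC_pow_wt {C : Finset (Fin n)} {e : ℕ} {f : MvPolynomial (Fin n) k}
    (hf : f ∈ PC k C ^ e) : ∀ b ∈ f.support, e ≤ wtC C b := by
  classical
  induction e generalizing f with
  | zero => intro b _; omega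
  | succ e ih =>
    rw [pow_succ] at hf
    refine Submodule.mul_induction_on hf ?_ ?_
    · intro g hg h hh b hb
      rcases Finset.mem_add.1 (support_mul g h hb) with ⟨c, hc, d, hd, rfl⟩
      have h1 := ih hg c hc
      have h2 := mem_PC_wt hh d hd
      rw [wtC_add]
      omega
    · intro x y hx hy b hb
      rcases Finset.mem_union.1 (MvPolynomial.support_add hb) with h | h
      · exact hx b h
      · exact hy b h

lemma mem_PC_of_wt {C : Finset (Fin n)} {f : MvPolynomial (Fin n) k}
    (h : ∀ b ∈ f.support, 1 ≤ wtC C b) : f ∈ PC k C := by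
  classical
  rw [← f.support_sum_monomial_coeff]
  refine Ideal.sum_mem _ fun b hb => ?_
  obtain ⟨i, hiC, hbi⟩ : ∃ i ∈ C, b i ≠ 0 := by
    by_contra hc
    push_neg at hc
    have h0 : wtC C b = 0 := Finset.sum_eq_zero fun i hi => hc i hi
    have := h b hb
    omega
  have hle : Finsupp.single i 1 ≤ b := by
    rw [Finsupp.single_le_iff]
    omega
  have heq : monomial b (coeff b f)
      = X i * monomial (b - Finsupp.single i 1) (coeff b f) := by
    rw [X_as_monomial, monomial_mul, one_mul, add_tsub_cancel_of_le hle]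
  rw [heq]
  exact Ideal.mul_mem_right _ _ (Ideal.subset_span ⟨i, by simpa using hiC, rfl⟩)

lemma colon_key {C : Finset (Fin n)} {a : Fin n →₀ ℕ} (ha : wtC C a ≤ 2)
    {f : MvPolynomial (Fin n) k} (hf : f * monomial a 1 ∈ PC k C ^ 3) :
    f ∈ PC k C := by
  apply mem_PC_of_wt
  intro b hb
  have hmem : b + a ∈ (f * monomial a (1 : k)).support := by
    rw [MvPolynomial.mem_support_iff, coeff_mul_monomial, mul_one]
    exact MvPolynomial.mem_support_iff.1 hb
  have h3 := mem_PC_pow_wt hf _ hmem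
  rw [wtC_add] at h3
  omega

lemma X_mem_PC_iff {C : Finset (Fin n)} {i : Fin n} :
    (X i : MvPolynomial (Fin n) k) ∈ PC k C ↔ i ∈ C := by
  classical
  constructor
  · intro h
    have hb := mem_PC_wt h (Finsupp.single i 1) (by rw [support_X]; simp)
    rw [wtC_single] at hb
    by_contra hc
    simp [hc] at hb
  · intro h
    exact Ideal.subset_span ⟨i, by simpa using h, rfl⟩

lemma PC_isPrime (C : Finset (Fin n)) : (PC k C).IsPrime := by
  classical
  set φ : MvPolynomial (Fin n) k →ₐ[k] MvPolynomial (Fin n) k :=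
    aeval (fun i => if i ∈ C then 0 else X i) with hφ
  have hXφ : ∀ i : Fin n, φ (X i) = if i ∈ C then 0 else X i := by
    intro i; simp [hφ]
  have hsub : ∀ f : MvPolynomial (Fin n) k, f - φ f ∈ PC k C := by
    intro f
    induction f using MvPolynomial.induction_on with
    | C r => simp [hφ]
    | add p q hp hq =>
      have := Ideal.add_mem _ hp hq
      rw [map_add]
      convert this using 1
      ring
    | mul_X p i hp =>
      have h1 : p * X i - φ p * X i ∈ PC k C := by
        have := Ideal.mul_mem_right (X i) _ hp
        rwa [sub_mul] at this
      have h2 : φ p * X i - φ p * φ (X i) ∈ PC k C := by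
        by_cases hi : i ∈ C
        · rw [hXφ i, if_pos hi, mul_zero, sub_zero]
          exact Ideal.mul_mem_left _ _ (X_mem_PC_iff.2 hi)
        · rw [hXφ i, if_neg hi, sub_self]
          exact zero_mem _
      have := Ideal.add_mem _ h1 h2
      rw [map_mul]
      convert this using 1
      ring
  have hker : ∀ f : MvPolynomial (Fin n) k, f ∈ PC k C ↔ φ f = 0 := by
    intro f
    constructor
    · intro hf
      have hle : PC k C ≤ RingHom.ker φ := by
        rw [PC, Ideal.span_le]
        rintro g ⟨i, hi, rfl⟩
        simp only [Finset.mem_coe] at hi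
        rw [SetLike.mem_coe, RingHom.mem_ker, hXφ i, if_pos hi]
      exact hle hf
    · intro h0
      have := hsub f
      rwa [h0, sub_zero] at this
  constructor
  · intro htop
    have h1 : (1 : MvPolynomial (Fin n) k) ∈ PC k C := htop ▸ Submodule.mem_top
    rw [hker, map_one] at h1
    exact one_ne_zero h1
  · intro x y hxy
    rw [hker, map_mul] at hxy
    rcases mul_eq_zero.1 hxy with h | h
    · exact Or.inl ((hker x).2 h)
    · exact Or.inr ((hker y).2 h)

lemma minPrime_structure (G : SimpleGraph (Fin n)) {p : Ideal (MvPolynomial (Fin n) k)}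
    (hp : p ∈ (edgeIdeal k G).minimalPrimes) : ∃ C : Finset (Fin n), p = PC k C := by
  classical
  have hprime : p.IsPrime := hp.1.1
  have hIp : edgeIdeal k G ≤ p := hp.1.2
  set C : Finset (Fin n) :=
    Finset.univ.filter (fun i => (X i : MvPolynomial (Fin n) k) ∈ p) with hC
  refine ⟨C, ?_⟩
  have h1 : PC k C ≤ p := by
    rw [PC, Ideal.span_le]
    rintro g ⟨i, hi, rfl⟩
    simp only [Finset.mem_coe, hC, Finset.mem_filter] at hi
    exact hi.2
  have h2 : edgeIdeal k G ≤ PC k C := by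
    rw [edgeIdeal, Ideal.span_le]
    rintro g ⟨i, j, hadj, rfl⟩
    have hmem : (X i : MvPolynomial (Fin n) k) * X j ∈ p :=
      hIp (Ideal.subset_span ⟨i, j, hadj, rfl⟩)
    rcases hprime.mem_or_mem hmem with h | h
    · refine Ideal.mul_mem_right _ _ (X_mem_PC_iff.2 ?_)
      simp [hC, h]
    · refine Ideal.mul_mem_left _ _ (X_mem_PC_iff.2 ?_)
      simp [hC, h]
  exact le_antisymm (hp.2 ⟨PC_isPrime C, h2⟩ h1) h1

lemma mem_edgeIdeal_iff (G : SimpleGraph (Fin n)) (f : MvPolynomial (Fin n) k) :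
    f ∈ edgeIdeal k G ↔
      ∀ b ∈ f.support, ∃ i j, G.Adj i j ∧ b i ≠ 0 ∧ b j ≠ 0 := by
  classical
  constructor
  · intro hf
    induction hf using Submodule.span_induction with
    | mem x hx =>
      obtain ⟨i, j, hadj, rfl⟩ := hx
      intro b hb
      have hx2 : (X i : MvPolynomial (Fin n) k) * X j
          = monomial (Finsupp.single i 1 + Finsupp.single j 1) 1 := by
        rw [X_as_monomial, X_as_monomial, monomial_mul, one_mul]
      rw [hx2, support_monomial] at hb
      simp only [if_neg (one_ne_zero (α := k)), Finset.mem_singleton] at hb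
      subst hb
      refine ⟨i, j, hadj, ?_, ?_⟩ <;>
        simp [Finsupp.single_apply]
    | zero => simp
    | add x y hx hy ihx ihy =>
      intro b hb
      rcases Finset.mem_union.1 (MvPolynomial.support_add hb) with h | h
      · exact ihx b h
      · exact ihy b h
    | smul r x hx ih =>
      intro b hb
      have hb' : b ∈ (r * x).support := by simpa [smul_eq_mul] using hb
      rcases Finset.mem_add.1 (support_mul r x hb') with ⟨c, _, d, hd, rfl⟩
      obtain ⟨i, j, hadj, hdi, hdj⟩ := ih d hd
      refine ⟨i, j, hadj, ?_, ?_⟩ <;> simp [Finsupp.add_apply] <;> omega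
  · intro h
    rw [← f.support_sum_monomial_coeff]
    refine Ideal.sum_mem _ fun b hb => ?_
    obtain ⟨i, j, hadj, hbi, hbj⟩ := h b hb
    have hne : i ≠ j := hadj.ne
    have hle : Finsupp.single i 1 + Finsupp.single j 1 ≤ b := by
      rw [Finsupp.le_def]
      intro t
      rw [Finsupp.add_apply, Finsupp.single_apply, Finsupp.single_apply]
      by_cases hi : i = t
      · subst hi
        rw [if_pos rfl, if_neg (fun h => hne h.symm)]
        omega
      · rw [if_neg hi]
        by_cases hj : j = t
        · subst hj
          rw [if_pos rfl]
          omega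
        · rw [if_neg hj]
          omega
    have heq : monomial b (coeff b f) = (X i * X j)
        * monomial (b - (Finsupp.single i 1 + Finsupp.single j 1)) (coeff b f) := by
      rw [X_as_monomial, X_as_monomial, monomial_mul, monomial_mul, one_mul, one_mul,
        add_tsub_cancel_of_le hle]
    rw [heq]
    exact Ideal.mul_mem_right _ _ (Ideal.subset_span ⟨i, j, hadj, rfl⟩)

lemma edge_radical (G : SimpleGraph (Fin n)) :
    (edgeIdeal k G).radical = edgeIdeal k G := by
  classical
  refine le_antisymm ?_ Ideal.le_radical
  intro f hf
  rw [mem_edgeIdeal_iff]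
  intro b hb
  by_contra hc
  push_neg at hc
  set C : Finset (Fin n) := Finset.univ.filter (fun i => b i = 0) with hC
  have hle : edgeIdeal k G ≤ PC k C := by
    rw [edgeIdeal, Ideal.span_le]
    rintro g ⟨i, j, hadj, rfl⟩
    by_cases hbi : b i = 0
    · refine Ideal.mul_mem_right _ _ (X_mem_PC_iff.2 ?_)
      simp [hC, hbi]
    · have hbj : b j = 0 := hc i j hadj hbi
      refine Ideal.mul_mem_left _ _ (X_mem_PC_iff.2 ?_)
      simp [hC, hbj]
  obtain ⟨N, hN⟩ := hf
  have hfP : f ∈ PC k C := (PC_isPrime C).mem_of_pow_mem N (hle hN)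
  have h1 := mem_PC_wt hfP b hb
  have h0 : wtC C b = 0 :=
    Finset.sum_eq_zero fun i hi => (Finset.mem_filter.1 hi).2
  omega

lemma dirA {p : Ideal (MvPolynomial (Fin n) k)} (hp : p.IsPrime)
    {v₁ v₂ v₃ : Fin n} {f : MvPolynomial (Fin n) k}
    (h1 : f * X v₁ ∈ p) (h2 : f * (X v₂ * X v₃) ∈ p) :
    f ^ 3 * (X v₁ ^ 2 * X v₂ * X v₃) ∈ p ^ 3 := by
  by_cases hx1 : (X v₁ : MvPolynomial (Fin n) k) ∈ p
  · by_cases hx23 : (X v₂ : MvPolynomial (Fin n) k) * X v₃ ∈ p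
    · have hm : (X v₁ : MvPolynomial (Fin n) k) ^ 2 * X v₂ * X v₃ ∈ p ^ 3 := by
        have h3 : (X v₁ : MvPolynomial (Fin n) k) ^ 2 * (X v₂ * X v₃) ∈ p ^ 2 * p :=
          Ideal.mul_mem_mul (Ideal.pow_mem_pow hx1 2) hx23
        rw [← pow_succ] at h3
        rw [mul_assoc]
        exact h3
      exact Ideal.mul_mem_left _ _ hm
    · have hfp : f ∈ p := (hp.mem_or_mem h2).resolve_right hx23
      exact Ideal.mul_mem_right _ _ (Ideal.pow_mem_pow hfp 3)
  · have hfp : f ∈ p := (hp.mem_or_mem h1).resolve_right hx1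
    exact Ideal.mul_mem_right _ _ (Ideal.pow_mem_pow hfp 3)

lemma dirB (G : SimpleGraph (Fin n)) {p : Ideal (MvPolynomial (Fin n) k)}
    (hp : p ∈ (edgeIdeal k G).minimalPrimes) {v₁ v₂ v₃ : Fin n}
    {f : MvPolynomial (Fin n) k} {N : ℕ}
    (h : f ^ N * (X v₁ ^ 2 * X v₂ * X v₃) ∈ p ^ 3) :
    f * X v₁ ∈ p ∧ f * (X v₂ * X v₃) ∈ p := by
  classical
  obtain ⟨C, rfl⟩ := minPrime_structure G hp
  have hprime : (PC (n := n) k C).IsPrime := PC_isPrime C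
  set a : Fin n →₀ ℕ :=
    Finsupp.single v₁ 2 + Finsupp.single v₂ 1 + Finsupp.single v₃ 1 with ha
  have hm : (X v₁ ^ 2 * X v₂ * X v₃ : MvPolynomial (Fin n) k) = monomial a 1 := by
    rw [X_pow_eq_monomial, X_as_monomial v₂, X_as_monomial v₃, monomial_mul, monomial_mul,
      one_mul, one_mul]
  rw [hm] at h
  have hkey : wtC C a ≤ 2 → f ∈ PC k C := by
    intro hwt
    have hfN : f ^ N ∈ PC k C := colon_key hwt h
    cases N with
    | zero =>
      exfalso
      exact hprime.ne_top (Ideal.eq_top_iff_one _ |>.2 (by simpa using hfN))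
    | succ N => exact hprime.mem_of_pow_mem _ hfN
  have hwa : ∀ [Decidable (v₁ ∈ C)] [Decidable (v₂ ∈ C)] [Decidable (v₃ ∈ C)],
      wtC C a = (if v₁ ∈ C then 2 else 0) + (if v₂ ∈ C then 1 else 0)
        + (if v₃ ∈ C then 1 else 0) := by
    intro _ _ _
    rw [ha, wtC_add, wtC_add, wtC_single, wtC_single, wtC_single]
  constructor
  · by_cases h1 : v₁ ∈ C
    · exact Ideal.mul_mem_left _ _ (X_mem_PC_iff.2 h1)
    · refine Ideal.mul_mem_right _ _ (hkey ?_)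
      rw [hwa]
      split_ifs <;> omega
  · by_cases h2 : v₂ ∈ C
    · exact Ideal.mul_mem_left _ _ (Ideal.mul_mem_right _ _ (X_mem_PC_iff.2 h2))
    · by_cases h3 : v₃ ∈ C
      · exact Ideal.mul_mem_left _ _ (Ideal.mul_mem_left _ _ (X_mem_PC_iff.2 h3))
      · refine Ideal.mul_mem_right _ _ (hkey ?_)
        rw [hwa]
        split_ifs <;> omega

end Aux

/-- `√(I^(3) : x₁²x₂x₃) = (I : x₁) ∩ (I : x₂x₃)`. -/
theorem stmt14 {k : Type*} [Field k] {n : ℕ} (G : SimpleGraph (Fin n))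
    (v₁ v₂ v₃ : Fin n) (h₁₂ : v₁ ≠ v₂) (h₁₃ : v₁ ≠ v₃) (h₂₃ : v₂ ≠ v₃) :
    (Submodule.colon (symbPow (edgeIdeal k G) 3)
        (Ideal.span {X v₁ ^ 2 * X v₂ * X v₃} : Ideal (MvPolynomial (Fin n) k))).radical
      = Submodule.colon (edgeIdeal k G)
          (Ideal.span {X v₁} : Ideal (MvPolynomial (Fin n) k))
        ⊓ Submodule.colon (edgeIdeal k G)
          (Ideal.span {X v₂ * X v₃} : Ideal (MvPolynomial (Fin n) k)) := by
  classical
  have hinf : ∀ g : MvPolynomial (Fin n) k,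
      g ∈ edgeIdeal k G ↔ ∀ p ∈ (edgeIdeal k G).minimalPrimes, g ∈ p := by
    intro g
    constructor
    · exact fun hg p hp => hp.1.2 hg
    · intro hg
      have hmem : g ∈ sInf (edgeIdeal k G).minimalPrimes :=
        Ideal.mem_sInf.2 fun {p} hp => hg p hp
      rwa [Ideal.sInf_minimalPrimes, edge_radical G] at hmem
  ext f
  simp only [Submodule.mem_inf]
  rw [Ideal.mem_radical_iff]
  constructor
  · rintro ⟨N, hN⟩
    rw [Ideal.mem_colon_span_singleton] at hN
    have hNp : ∀ p ∈ (edgeIdeal k G).minimalPrimes,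
        f ^ N * (X v₁ ^ 2 * X v₂ * X v₃) ∈ p ^ 3 := by
      intro p hp
      rw [symbPow] at hN
      simp only [Ideal.mem_iInf] at hN
      exact hN p hp
    constructor
    · rw [Ideal.mem_colon_span_singleton, hinf]
      intro p hp
      exact (dirB G hp (hNp p hp)).1
    · rw [Ideal.mem_colon_span_singleton, hinf]
      intro p hp
      exact (dirB G hp (hNp p hp)).2
  · rintro ⟨hc1, hc2⟩
    rw [Ideal.mem_colon_span_singleton, hinf] at hc1 hc2
    refine ⟨3, ?_⟩
    rw [Ideal.mem_colon_span_singleton, symbPow]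
    simp only [Ideal.mem_iInf]
    intro p hp
    exact dirA hp.1.1 (hc1 p hp) (hc2 p hp)
end
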